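/- arXiv:2110.05959 — 2 statements merged into one kernel-verified Lean document; each statement's English description precedes it below -/
import Mathlib

section
/- Let q be a prime power, n ≥ 0, 0 ≤ h ≤ n+1, ρ₁ ∈ {1,...,n₁-1} with ρ₁ ≥ h+1, and π₁ with 0 ≤ π₁ ≤ n₁ - ρ₁ - 1 if n is even (0 ≤ π₁ ≤ n₁ - ρ₁ if n is odd). The number of sequences α ∈ F_q^{n+1} with α₀ = ... = α_{h-1} = 0, ρ(α) = ρ₁, and π(α) = π₁ equals (q-1)q^{2ρ₁-h-1} if π₁ = 0, and (q-1)² q^{2ρ₁+π₁-h-2} if π₁ > 0. -/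
open Matrix Polynomial

/-- The `l × m` Hankel matrix whose `(i,j)` entry (zero-indexed) is `α (i + j)`. -/
def hankel (F : Type) [Field F] (l m : ℕ) (α : ℕ → F) : Matrix (Fin l) (Fin m) F :=
  Matrix.of fun i j => α (i.1 + j.1)

/-- `ρ(α)`: the largest `l ≤ n₁ = (n+2)/2` such that the top-left `l × l` Hankel matrix
of `α` is invertible (`0` if none exists). -/
noncomputable def rhoC (F : Type) [Field F] (n : ℕ) (α : ℕ → F) : ℕ :=
  sSup {l | l ≤ (n + 2) / 2 ∧ (hankel F l l α).det ≠ 0}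

/-- `π(α) = rank H_{n₁,n₂}(α) - ρ(α)`. -/
noncomputable def piC (F : Type) [Field F] (n : ℕ) (α : ℕ → F) : ℕ :=
  (hankel F ((n + 2) / 2) ((n + 3) / 2) α).rank - rhoC F n α

/-- `deg B ≤ k` for an integer bound `k` (so `k < 0` forces `B = 0`). -/
def degLE (F : Type) [Field F] (B : Polynomial F) (k : ℤ) : Prop :=
  ∀ i : ℕ, k < (i : ℤ) → B.coeff i = 0

/-- `A₁, A₂` are characteristic polynomials for the sequence `α` (of length `n+1`) with
first characteristic degree `c₁ = r` and second characteristic degree `c₂ = n+2-r`: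
the kernels of all the Hankel matrices `H_{l,m}(α)`, `l+m-2 = n`, consist exactly of the
(coefficient vectors of) polynomials `B₁A₁ + B₂A₂` with `deg B₁ ≤ m - c₁ - 1` and
`deg B₂ ≤ m - c₂ - 1`. -/
def IsCharSeq (F : Type) [Field F] (n r : ℕ) (A₁ A₂ : Polynomial F) (α : ℕ → F) : Prop :=
  ∀ l m : ℕ, 1 ≤ l → 1 ≤ m → l + m = n + 2 →
    {v : Fin m → F | (hankel F l m α).mulVec v = 0} =
    {v : Fin m → F | ∃ B₁ B₂ : Polynomial F,
      degLE F B₁ ((m : ℤ) - r - 1) ∧ degLE F B₂ ((m : ℤ) - ((n : ℤ) + 2 - r) - 1) ∧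
      v = fun i : Fin m => (B₁ * A₁ + B₂ * A₂).coeff (i : ℕ)}

/-- A sequence `α ∈ F^{n+1}` viewed as a function `ℕ → F` (zero beyond index `n`). -/
def extSeq (F : Type) [Field F] (n : ℕ) (α : Fin (n + 1) → F) : ℕ → F :=
  fun i => if h : i < n + 1 then α ⟨i, h⟩ else 0

/-- The extension of a sequence of length `n+1` by a new entry `c` at index `n+1`. -/
def extendSeq (F : Type) [Field F] (n : ℕ) (α : ℕ → F) (c : F) : ℕ → F :=
  fun i => if i = n + 1 then c else α i


variable {F : Type} [Field F]

/-- picks rows/cols: submatrix rank is at most rank. -/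
lemma rank_submatrix_le' {l m : ℕ} {ι ι' : Type} [Fintype ι] [DecidableEq ι] [Fintype ι'] [DecidableEq ι']
    (M : Matrix (Fin l) (Fin m) F) (r : ι → Fin l) (c : ι' → Fin m) :
    (M.submatrix r c).rank ≤ M.rank := by
  classical
  let P : Matrix ι (Fin l) F := Matrix.of fun a i => if r a = i then 1 else 0
  let Q : Matrix (Fin m) ι' F := Matrix.of fun j b => if c b = j then 1 else 0
  have h : P * M * Q = M.submatrix r c := by
    ext a b
    simp only [Matrix.mul_apply, Matrix.submatrix_apply]
    have h1 : ∀ j, (∑ i, P a i * M i j) = M (r a) j := by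
      intro j
      rw [Finset.sum_eq_single (r a)]
      · simp [P]
      · intro i _ hi; simp only [P, Matrix.of_apply, ite_mul, one_mul, zero_mul, ite_eq_right_iff]
        intro hh; exact absurd hh hi.symm
      · intro hmem; exact absurd (Finset.mem_univ _) hmem
    calc (∑ j, (∑ i, P a i * M i j) * Q j b) = ∑ j, M (r a) j * Q j b := by
          simp_rw [h1]
      _ = M (r a) (c b) := by
          rw [Finset.sum_eq_single (c b)]
          · simp [Q]
          · intro j _ hj; simp only [Q, Matrix.of_apply, mul_ite, mul_one, mul_zero, ite_eq_right_iff]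
            intro hh; exact absurd hh hj.symm
          · intro hmem; exact absurd (Finset.mem_univ _) hmem
  rw [← h]
  exact le_trans (Matrix.rank_mul_le_left _ _) (Matrix.rank_mul_le_right _ _)

/-- if all rows outside the (injective) range of `r` vanish, rank ≤ #ι. -/
lemma rank_le_of_rows {l m : ℕ} {ι : Type} [Fintype ι] [DecidableEq ι]
    (M : Matrix (Fin l) (Fin m) F) (r : ι → Fin l) (hr : Function.Injective r)
    (hz : ∀ i, (¬ ∃ a, r a = i) → ∀ j, M i j = 0) :
    M.rank ≤ Fintype.card ι := by
  classical
  let P : Matrix (Fin l) ι F := Matrix.of fun i a => if r a = i then 1 else 0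
  have h : P * (M.submatrix r id) = M := by
    ext i j
    simp only [Matrix.mul_apply, Matrix.submatrix_apply, id]
    by_cases hex : ∃ a, r a = i
    · obtain ⟨a₀, ha₀⟩ := hex
      rw [Finset.sum_eq_single a₀]
      · simp [P, ha₀]
      · intro a _ ha
        have : r a ≠ i := fun hh => ha (hr (hh.trans ha₀.symm))
        simp [P, this]
      · intro hmem; exact absurd (Finset.mem_univ _) hmem
    · rw [hz i hex j]
      apply Finset.sum_eq_zero
      intro a _
      have : r a ≠ i := fun hh => hex ⟨a, hh⟩
      simp [P, this]
  rw [← h]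
  exact le_trans (Matrix.rank_mul_le_right _ _) (Matrix.rank_le_card_height _)


lemma hankel_apply (l m : ℕ) (γ : ℕ → F) (i : Fin l) (j : Fin m) :
    hankel F l m γ i j = γ (i.1 + j.1) := rfl

/-- recurrence coefficients from the invertible σ×σ Hankel block -/
noncomputable def cvec (F : Type) [Field F] (σ : ℕ) (γ : ℕ → F) : Fin σ → F :=
  ((hankel F σ σ γ)⁻¹).mulVec fun k => γ (σ + k.1)

/-- defect sequence -/
noncomputable def dft (F : Type) [Field F] (σ : ℕ) (γ : ℕ → F) : ℕ → F :=
  fun k => γ (k + σ) - ∑ t : Fin σ, cvec F σ γ t * γ (k + t.1)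

lemma dft_eq_zero_of_lt {σ : ℕ} {γ : ℕ → F} (hdet : (hankel F σ σ γ).det ≠ 0)
    {k : ℕ} (hk : k < σ) : dft F σ γ k = 0 := by
  have hu : IsUnit (hankel F σ σ γ).det := isUnit_iff_ne_zero.mpr hdet
  have h1 : (hankel F σ σ γ).mulVec (cvec F σ γ) = fun k : Fin σ => γ (σ + k.1) := by
    rw [cvec, Matrix.mulVec_mulVec, Matrix.mul_nonsing_inv _ hu, Matrix.one_mulVec]
  have h2 := congrFun h1 ⟨k, hk⟩
  simp only [Matrix.mulVec, dotProduct, hankel_apply] at h2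
  rw [dft, sub_eq_zero, Nat.add_comm k σ, ← h2]
  apply Finset.sum_congr rfl
  intro t _
  rw [mul_comm]

/-- shift matrix -/
def shiftE (F : Type) [Field F] (σ l : ℕ) (t : Fin σ) : Matrix (Fin l) (Fin l) F :=
  Matrix.of fun i j => if σ ≤ i.1 ∧ j.1 + σ = i.1 + t.1 then 1 else 0

/-- row-reduction matrix -/
noncomputable def redM (F : Type) [Field F] (σ l : ℕ) (c : Fin σ → F) : Matrix (Fin l) (Fin l) F :=
  1 - ∑ t : Fin σ, c t • shiftE F σ l t

lemma shiftE_mul (σ l m : ℕ) (t : Fin σ) (H : Matrix (Fin l) (Fin m) F) (i : Fin l) (j : Fin m) :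
    (shiftE F σ l t * H) i j =
      if h : σ ≤ i.1 then H ⟨i.1 - σ + t.1, by omega⟩ j else 0 := by
  simp only [Matrix.mul_apply, shiftE, Matrix.of_apply]
  by_cases h : σ ≤ i.1
  · rw [dif_pos h]
    have hb : (i.1 - σ + t.1) < l := by omega
    rw [Finset.sum_eq_single (⟨i.1 - σ + t.1, hb⟩ : Fin l)]
    · rw [if_pos ⟨h, by simp only [Fin.val_mk]; omega⟩, one_mul]
    · intro b _ hb'
      have : ¬ (σ ≤ i.1 ∧ b.1 + σ = i.1 + t.1) := by
        rintro ⟨-, h2⟩; apply hb'; apply Fin.ext; simp only [Fin.val_mk]; omega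
      simp [this]
    · intro hmem; exact absurd (Finset.mem_univ _) hmem
  · rw [dif_neg h]
    apply Finset.sum_eq_zero
    intro b _
    have : ¬ (σ ≤ i.1 ∧ b.1 + σ = i.1 + t.1) := by tauto
    simp [this]

lemma redM_mul_hankel (σ l m : ℕ) (γ : ℕ → F) (i : Fin l) (j : Fin m) :
    (redM F σ l (cvec F σ γ) * hankel F l m γ) i j =
      if σ ≤ i.1 then dft F σ γ (i.1 - σ + j.1) else γ (i.1 + j.1) := by
  rw [redM, Matrix.sub_mul, Matrix.one_mul, Matrix.sum_mul]
  simp only [Matrix.sub_apply, Matrix.sum_apply, Matrix.smul_mul, Matrix.smul_apply,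
    shiftE_mul, smul_eq_mul, hankel_apply]
  by_cases h : σ ≤ i.1
  · simp only [dif_pos h, if_pos h, dft, hankel_apply]
    have : i.1 - σ + j.1 + σ = i.1 + j.1 := by omega
    rw [this]
    congr 1
    apply Finset.sum_congr rfl
    intro t _
    congr 2
    omega
  · simp only [dif_neg h, if_neg h, mul_zero, Finset.sum_const_zero, sub_zero]

lemma redM_det (σ l : ℕ) (c : Fin σ → F) : (redM F σ l c).det = 1 := by
  have htri : (redM F σ l c).BlockTriangular OrderDual.toDual := by
    intro i j hij
    have hij' : i < j := hij
    simp only [redM, Matrix.sub_apply, Matrix.one_apply, Matrix.sum_apply, Matrix.smul_apply,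
      shiftE, Matrix.of_apply, smul_eq_mul]
    rw [if_neg (by exact fun hh => absurd hh (ne_of_lt hij'))]
    rw [Finset.sum_eq_zero, sub_zero]
    intro t _
    have : ¬ (σ ≤ i.1 ∧ j.1 + σ = i.1 + t.1) := by
      rintro ⟨h1, h2⟩
      have := t.2
      have := Fin.lt_iff_val_lt_val.mp hij'
      omega
    simp [this]
  rw [Matrix.det_of_lowerTriangular _ htri]
  apply Finset.prod_eq_one
  intro i _
  simp only [redM, Matrix.sub_apply, Matrix.one_apply_eq, Matrix.sum_apply, Matrix.smul_apply,
    shiftE, Matrix.of_apply, smul_eq_mul]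
  rw [Finset.sum_eq_zero, sub_zero]
  intro t _
  have : ¬ (σ ≤ i.1 ∧ i.1 + σ = i.1 + t.1) := by
    rintro ⟨h1, h2⟩; have := t.2; omega
  rw [if_neg this, mul_zero]
section S3
variable {F : Type} [Field F]

lemma det_ne_zero_of_rank_eq {p : ℕ} (M : Matrix (Fin p) (Fin p) F) (h : M.rank = p) :
    M.det ≠ 0 := by
  intro hdet
  obtain ⟨v, hv, hv0⟩ := Matrix.exists_mulVec_eq_zero_iff.mpr hdet
  have hker : v ∈ LinearMap.ker M.mulVecLin := by
    simpa [Matrix.mulVecLin_apply] using hv0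
  have h1 := LinearMap.finrank_range_add_finrank_ker M.mulVecLin
  have h2 : Module.finrank F (Fin p → F) = p := by simp
  rw [h2, ← Matrix.rank, h] at h1
  have h3 : Module.finrank F (LinearMap.ker M.mulVecLin) = 0 := by omega
  rw [Submodule.finrank_eq_zero] at h3
  rw [h3, Submodule.mem_bot] at hker
  exact hv hker

variable {σ : ℕ} {γ : ℕ → F}

lemma rank_hankel_eq_red (l m : ℕ) :
    (hankel F l m γ).rank = (redM F σ l (cvec F σ γ) * hankel F l m γ).rank := by
  rw [Matrix.rank_mul_eq_right_of_isUnit_det]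
  rw [redM_det]; exact isUnit_one

lemma det_hankel_eq_red (l : ℕ) :
    (hankel F l l γ).det = (redM F σ l (cvec F σ γ) * hankel F l l γ).det := by
  rw [Matrix.det_mul, redM_det, one_mul]

/-- if the defects vanish below `l` then the `l×l` Hankel matrix is singular -/
lemma det_hankel_zero {l : ℕ} (hσl : σ < l) (hz : ∀ k, k < l → dft F σ γ k = 0) :
    (hankel F l l γ).det = 0 := by
  rw [det_hankel_eq_red (σ := σ)]
  apply Matrix.det_eq_zero_of_row_eq_zero ⟨σ, hσl⟩
  intro j
  rw [redM_mul_hankel]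
  rw [if_pos (by simp)]
  apply hz
  simp only [Fin.val_mk]
  have := j.2
  omega

/-- rank is at least σ -/
lemma rank_hankel_ge (hdet : (hankel F σ σ γ).det ≠ 0) (l m : ℕ) (hl : σ ≤ l) (hm : σ ≤ m) :
    σ ≤ (hankel F l m γ).rank := by
  have hsub : (hankel F l m γ).submatrix (Fin.castLE hl) (Fin.castLE hm) = hankel F σ σ γ := rfl
  have h1 := rank_submatrix_le' (hankel F l m γ) (Fin.castLE hl) (Fin.castLE hm)
  rw [hsub, Matrix.rank_of_isUnit _ ((Matrix.isUnit_iff_isUnit_det _).mpr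
    (isUnit_iff_ne_zero.mpr hdet))] at h1
  simpa using h1

/-- no deviation in range ⇒ rank = σ -/
lemma rank_hankel_no_dev (hdet : (hankel F σ σ γ).det ≠ 0) (a b : ℕ)
    (hz : ∀ k, k < σ + a + b - 1 → dft F σ γ k = 0) :
    (hankel F (σ + a) (σ + b) γ).rank = σ := by
  apply le_antisymm
  · rw [rank_hankel_eq_red (σ := σ)]
    have h := rank_le_of_rows (redM F σ (σ+a) (cvec F σ γ) * hankel F (σ+a) (σ+b) γ)
      (fun k : Fin σ => Fin.castLE (by omega) k) (fun x y hxy => by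
        simpa [Fin.ext_iff] using hxy) ?_
    · simpa using h
    · intro i hi j
      have hiσ : σ ≤ i.1 := by
        by_contra hc
        exact hi ⟨⟨i.1, by omega⟩, by simp [Fin.ext_iff]⟩
      rw [redM_mul_hankel, if_pos hiσ]
      apply hz
      have := i.2; have := j.2
      omega
  · exact rank_hankel_ge hdet _ _ (by omega) (by omega)

/-- first deviation at k₀ ⇒ rank = σ + s -/
lemma rank_hankel_dev (hdet : (hankel F σ σ γ).det ≠ 0) (a b k₀ s : ℕ)
    (hs : k₀ + s + 1 = σ + a + b) (hs1 : 1 ≤ s)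
    (hk1 : σ + a ≤ k₀ + 1) (hk2 : σ + b ≤ k₀ + 1)
    (hz : ∀ k, k < k₀ → dft F σ γ k = 0) (hnz : dft F σ γ k₀ ≠ 0) :
    (hankel F (σ + a) (σ + b) γ).rank = σ + s := by
  have hi₀ : σ + s ≤ σ + a := by omega
  have hj₀ : σ + s ≤ σ + b := by omega
  set B := redM F σ (σ+a) (cvec F σ γ) * hankel F (σ+a) (σ+b) γ with hB
  have hBij : ∀ (i : Fin (σ+a)) (j : Fin (σ+b)),
      B i j = if σ ≤ i.1 then dft F σ γ (i.1 - σ + j.1) else γ (i.1 + j.1) :=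
    fun i j => redM_mul_hankel σ (σ+a) (σ+b) γ i j
  set r : Fin σ ⊕ Fin s → Fin (σ+a) := fun x => Sum.casesOn x
    (fun k => Fin.castLE (by omega) k) (fun k => ⟨k₀ + 1 - b + k.1, by omega⟩) with hr
  set c : Fin σ ⊕ Fin s → Fin (σ+b) := fun x => Sum.casesOn x
    (fun k => Fin.castLE (by omega) k) (fun k => ⟨k₀ + 1 - a + k.1, by omega⟩) with hc
  have hrv1 : ∀ k : Fin σ, (r (Sum.inl k)).1 = k.1 := fun k => rfl
  have hrv2 : ∀ k : Fin s, (r (Sum.inr k)).1 = k₀ + 1 - b + k.1 := fun k => rfl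
  have hcv1 : ∀ k : Fin σ, (c (Sum.inl k)).1 = k.1 := fun k => rfl
  have hcv2 : ∀ k : Fin s, (c (Sum.inr k)).1 = k₀ + 1 - a + k.1 := fun k => rfl
  have hrinj : Function.Injective r := by
    rintro (x|x) (y|y) hxy
    · have := congrArg Fin.val hxy
      rw [hrv1, hrv1] at this
      rw [Fin.ext_iff.mpr this]
    · have := congrArg Fin.val hxy
      rw [hrv1, hrv2] at this
      have hx := x.2; omega
    · have := congrArg Fin.val hxy
      rw [hrv2, hrv1] at this
      have hy := y.2; omega
    · have := congrArg Fin.val hxy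
      rw [hrv2, hrv2] at this
      congr
      omega
  apply le_antisymm
  · rw [rank_hankel_eq_red (σ := σ), ← hB]
    have h := rank_le_of_rows B r hrinj ?_
    · simpa using h
    · intro i hi j
      have hiσ : σ ≤ i.1 := by
        by_contra hc'
        exact hi ⟨Sum.inl ⟨i.1, by omega⟩, by apply Fin.ext; rw [hrv1]⟩
      have hilt : i.1 < k₀ + 1 - b := by
        by_contra hc'
        refine hi ⟨Sum.inr ⟨i.1 - (k₀ + 1 - b), by have := i.2; omega⟩, ?_⟩
        apply Fin.ext; rw [hrv2]; simp only [Fin.val_mk]; omega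
      rw [hBij, if_pos hiσ]
      apply hz
      have := j.2
      omega
  · set T : Matrix (Fin s) (Fin s) F :=
      Matrix.of fun k k' => dft F σ γ (k₀ + k.1 + k'.1 + 1 - s) with hT
    set X : Matrix (Fin σ) (Fin s) F :=
      Matrix.of fun k k' => γ (k.1 + (k₀ + 1 - a + k'.1)) with hX
    have hM' : B.submatrix r c = Matrix.fromBlocks (hankel F σ σ γ) X 0 T := by
      ext x y
      rcases x with x|x <;> rcases y with y|y <;>
        simp only [Matrix.submatrix_apply, Matrix.fromBlocks_apply₁₁, Matrix.fromBlocks_apply₁₂,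
          Matrix.fromBlocks_apply₂₁, Matrix.fromBlocks_apply₂₂, Matrix.zero_apply]
      · rw [hBij, if_neg (by rw [hrv1]; have := x.2; omega)]
        rw [hrv1, hcv1]; rfl
      · rw [hBij, if_neg (by rw [hrv1]; have := x.2; omega)]
        rw [hrv1, hcv2]; rfl
      · rw [hBij, if_pos (by rw [hrv2]; omega)]
        rw [hrv2, hcv1]
        apply hz
        have := x.2; have := y.2
        omega
      · rw [hBij, if_pos (by rw [hrv2]; omega)]
        rw [hrv2, hcv2, hT]
        simp only [Matrix.of_apply]
        congr 1
        have := x.2; have := y.2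
        omega
    have hdetT : T.det ≠ 0 := by
      have hT' : (T.submatrix Fin.revPerm id).det = dft F σ γ k₀ ^ s := by
        rw [Matrix.det_of_upperTriangular (by
          intro i j hij
          have hij' : j.1 < i.1 := hij
          simp only [Matrix.submatrix_apply, hT, Matrix.of_apply, id_eq, Fin.revPerm_apply,
            Fin.val_rev]
          apply hz
          have := i.2; have := j.2
          omega)]
        have : ∀ i : Fin s, (T.submatrix Fin.revPerm id) i i = dft F σ γ k₀ := by
          intro i
          simp only [Matrix.submatrix_apply, hT, Matrix.of_apply, id_eq, Fin.revPerm_apply,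
            Fin.val_rev]
          congr 1
          have := i.2; omega
        rw [Finset.prod_congr rfl (fun i _ => this i), Finset.prod_const, Finset.card_univ,
          Fintype.card_fin]
      intro h0
      rw [show (T.submatrix Fin.revPerm id) = (T.submatrix (Fin.revPerm : Equiv.Perm (Fin s))
        (id : Fin s → Fin s)) from rfl, Matrix.det_permute, h0, mul_zero] at hT'
      exact pow_ne_zero s hnz hT'.symm
    have hdetM' : (B.submatrix r c).det ≠ 0 := by
      rw [hM', Matrix.det_fromBlocks_zero₂₁]
      exact mul_ne_zero hdet hdetT
    have hrankM' : (B.submatrix r c).rank = σ + s := by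
      rw [Matrix.rank_of_isUnit _ ((Matrix.isUnit_iff_isUnit_det _).mpr
        (isUnit_iff_ne_zero.mpr hdetM'))]
      simp
    rw [rank_hankel_eq_red (σ := σ), ← hB]
    calc σ + s = (B.submatrix r c).rank := hrankM'.symm
      _ ≤ B.rank := rank_submatrix_le' B r c

/-- first deviation at k₀ ⇒ the (k₀+1)×(k₀+1) Hankel matrix is nonsingular -/
lemma det_hankel_dev (hdet : (hankel F σ σ γ).det ≠ 0) {k₀ : ℕ} (hσk : σ ≤ k₀)
    (hz : ∀ k, k < k₀ → dft F σ γ k = 0) (hnz : dft F σ γ k₀ ≠ 0) :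
    (hankel F (k₀+1) (k₀+1) γ).det ≠ 0 := by
  have h := rank_hankel_dev hdet (k₀+1-σ) (k₀+1-σ) k₀ (k₀+1-σ)
    (by omega) (by omega) (by omega) (by omega) hz hnz
  have he : σ + (k₀+1-σ) = k₀+1 := by omega
  rw [he] at h
  exact det_ne_zero_of_rank_eq _ h

end S3
section S4
variable {F : Type} [Field F]

lemma det_hankel_zero_fin : (hankel F 0 0 (γ : ℕ → F)).det ≠ 0 := by
  rw [Matrix.det_isEmpty]
  exact one_ne_zero

lemma rhoC_eq_iff (n : ℕ) (γ : ℕ → F) (r : ℕ) (hr : r ≤ (n+2)/2) :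
    rhoC F n γ = r ↔ ((hankel F r r γ).det ≠ 0 ∧
      ∀ l, r < l → l ≤ (n+2)/2 → (hankel F l l γ).det = 0) := by
  have hne : {l | l ≤ (n + 2) / 2 ∧ (hankel F l l γ).det ≠ 0}.Nonempty :=
    ⟨0, ⟨Nat.zero_le _, det_hankel_zero_fin⟩⟩
  have hbdd : BddAbove {l | l ≤ (n + 2) / 2 ∧ (hankel F l l γ).det ≠ 0} :=
    ⟨(n+2)/2, fun x hx => hx.1⟩
  constructor
  · intro h
    have hmem := Nat.sSup_mem hne hbdd
    rw [rhoC] at h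
    rw [h] at hmem
    refine ⟨hmem.2, fun l hl hln => ?_⟩
    by_contra hdl
    have : l ≤ r := by
      rw [← h]
      exact le_csSup hbdd ⟨hln, hdl⟩
    omega
  · rintro ⟨h1, h2⟩
    rw [rhoC]
    apply le_antisymm
    · apply csSup_le hne
      intro l hl
      by_contra hc
      exact hl.2 (h2 l (by omega) hl.1)
    · exact le_csSup hbdd ⟨hr, h1⟩

lemma char_pi0 (n ρ : ℕ) (γ : ℕ → F) (hρ2 : ρ + 1 ≤ (n+2)/2) :
    (rhoC F n γ = ρ ∧ piC F n γ = 0) ↔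
    ((hankel F ρ ρ γ).det ≠ 0 ∧ ∀ k, k ≤ n - ρ → dft F ρ γ k = 0) := by
  constructor
  · rintro ⟨hrho, hpi⟩
    obtain ⟨hdet, hmax⟩ := (rhoC_eq_iff n γ ρ (by omega)).mp hrho
    refine ⟨hdet, ?_⟩
    by_contra hdev
    push_neg at hdev
    obtain ⟨kw, hkw, hkwnz⟩ := hdev
    classical
    have hex : ∃ k, dft F ρ γ k ≠ 0 := ⟨kw, hkwnz⟩
    set k₀ := Nat.find hex with hk₀def
    have hnz : dft F ρ γ k₀ ≠ 0 := Nat.find_spec hex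
    have hmin : ∀ k, k < k₀ → dft F ρ γ k = 0 := by
      intro k hk
      by_contra hc
      exact absurd (Nat.find_min' hex hc) (by omega)
    have hk₀w : k₀ ≤ n - ρ := le_trans (Nat.find_min' hex hkwnz) hkw
    have hk₀ρ : ρ ≤ k₀ := by
      by_contra hc
      exact hnz (dft_eq_zero_of_lt hdet (by omega))
    have hk₀n₁ : (n+2)/2 ≤ k₀ := by
      by_contra hc
      have hd := det_hankel_dev hdet hk₀ρ hmin hnz
      exact hd (hmax (k₀+1) (by omega) (by omega))
    -- rank = ρ + s with s ≥ 1, so piC ≠ 0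
    have hrank := rank_hankel_dev hdet ((n+2)/2 - ρ) ((n+3)/2 - ρ) k₀ (n+1-ρ-k₀)
      (by omega) (by omega) (by omega) (by omega) hmin hnz
    rw [show ρ + ((n+2)/2 - ρ) = (n+2)/2 by omega,
      show ρ + ((n+3)/2 - ρ) = (n+3)/2 by omega] at hrank
    rw [piC, hrank, hrho] at hpi
    omega
  · rintro ⟨hdet, hz⟩
    have hrho : rhoC F n γ = ρ := by
      rw [rhoC_eq_iff n γ ρ (by omega)]
      refine ⟨hdet, fun l hl hln => ?_⟩
      apply det_hankel_zero hl
      intro k hk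
      apply hz
      omega
    refine ⟨hrho, ?_⟩
    have hrank := rank_hankel_no_dev hdet ((n+2)/2 - ρ) ((n+3)/2 - ρ)
      (by intro k hk; apply hz; omega)
    rw [show ρ + ((n+2)/2 - ρ) = (n+2)/2 by omega,
      show ρ + ((n+3)/2 - ρ) = (n+3)/2 by omega] at hrank
    rw [piC, hrank, hrho]
    omega

lemma char_pipos (n ρ π : ℕ) (γ : ℕ → F) (hρ2 : ρ + 1 ≤ (n+2)/2) (hπ1 : 1 ≤ π)
    (harith : (n+2)/2 + π + ρ ≤ n + 1) :
    (rhoC F n γ = ρ ∧ piC F n γ = π) ↔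
    ((hankel F ρ ρ γ).det ≠ 0 ∧ (∀ k, k < n+1-π-ρ → dft F ρ γ k = 0) ∧
      dft F ρ γ (n+1-π-ρ) ≠ 0) := by
  constructor
  · rintro ⟨hrho, hpi⟩
    obtain ⟨hdet, hmax⟩ := (rhoC_eq_iff n γ ρ (by omega)).mp hrho
    refine ⟨hdet, ?_⟩
    by_cases hdev : ∀ k, k ≤ n - ρ → dft F ρ γ k = 0
    · -- no deviation : piC = 0, contradiction
      have hrank := rank_hankel_no_dev hdet ((n+2)/2 - ρ) ((n+3)/2 - ρ)
        (by intro k hk; apply hdev; omega)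
      rw [show ρ + ((n+2)/2 - ρ) = (n+2)/2 by omega,
        show ρ + ((n+3)/2 - ρ) = (n+3)/2 by omega] at hrank
      rw [piC, hrank, hrho] at hpi
      omega
    · push_neg at hdev
      obtain ⟨kw, hkw, hkwnz⟩ := hdev
      classical
      have hex : ∃ k, dft F ρ γ k ≠ 0 := ⟨kw, hkwnz⟩
      set k₀ := Nat.find hex with hk₀def
      have hnz : dft F ρ γ k₀ ≠ 0 := Nat.find_spec hex
      have hmin : ∀ k, k < k₀ → dft F ρ γ k = 0 := by
        intro k hk
        by_contra hc
        exact absurd (Nat.find_min' hex hc) (by omega)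
      have hk₀w : k₀ ≤ n - ρ := le_trans (Nat.find_min' hex hkwnz) hkw
      have hk₀ρ : ρ ≤ k₀ := by
        by_contra hc
        exact hnz (dft_eq_zero_of_lt hdet (by omega))
      have hk₀n₁ : (n+2)/2 ≤ k₀ := by
        by_contra hc
        have hd := det_hankel_dev hdet hk₀ρ hmin hnz
        exact hd (hmax (k₀+1) (by omega) (by omega))
      have hrank := rank_hankel_dev hdet ((n+2)/2 - ρ) ((n+3)/2 - ρ) k₀ (n+1-ρ-k₀)
        (by omega) (by omega) (by omega) (by omega) hmin hnz
      rw [show ρ + ((n+2)/2 - ρ) = (n+2)/2 by omega,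
        show ρ + ((n+3)/2 - ρ) = (n+3)/2 by omega] at hrank
      rw [piC, hrank, hrho] at hpi
      have hk₀eq : k₀ = n+1-π-ρ := by omega
      rw [← hk₀eq]
      exact ⟨hmin, hnz⟩
  · rintro ⟨hdet, hz, hnz⟩
    have hrho : rhoC F n γ = ρ := by
      rw [rhoC_eq_iff n γ ρ (by omega)]
      refine ⟨hdet, fun l hl hln => ?_⟩
      apply det_hankel_zero hl
      intro k hk
      apply hz
      omega
    refine ⟨hrho, ?_⟩
    have hrank := rank_hankel_dev hdet ((n+2)/2 - ρ) ((n+3)/2 - ρ) (n+1-π-ρ) π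
      (by omega) hπ1 (by omega) (by omega) hz hnz
    rw [show ρ + ((n+2)/2 - ρ) = (n+2)/2 by omega,
      show ρ + ((n+3)/2 - ρ) = (n+3)/2 by omega] at hrank
    rw [piC, hrank, hrho]
    omega

end S4
section S5
variable {F : Type} [Field F]

/-- a finite tuple viewed as a function `ℕ → F`, zero beyond the end -/
def extP (F : Type) [Field F] (L : ℕ) (p : Fin L → F) : ℕ → F :=
  fun i => if h : i < L then p ⟨i, h⟩ else 0

lemma hankel_congr {σ : ℕ} {γ₁ γ₂ : ℕ → F} (h : ∀ i, i < 2*σ → γ₁ i = γ₂ i) :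
    hankel F σ σ γ₁ = hankel F σ σ γ₂ := by
  ext i j
  show γ₁ (i.1 + j.1) = γ₂ (i.1 + j.1)
  exact h _ (by have := i.2; have := j.2; omega)

lemma cvec_congr {σ : ℕ} {γ₁ γ₂ : ℕ → F} (h : ∀ i, i < 2*σ → γ₁ i = γ₂ i) :
    cvec F σ γ₁ = cvec F σ γ₂ := by
  rw [cvec, cvec, hankel_congr h,
    show (fun k : Fin σ => γ₁ (σ + k.1)) = (fun k : Fin σ => γ₂ (σ + k.1)) from
      funext fun k => h _ (by have := k.2; omega)]

lemma dft_congr {σ k : ℕ} {γ₁ γ₂ : ℕ → F} (h : ∀ i, i < 2*σ ∨ i ≤ k + σ → γ₁ i = γ₂ i) :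
    dft F σ γ₁ k = dft F σ γ₂ k := by
  rw [dft, dft, cvec_congr (fun i hi => h i (Or.inl hi)), h _ (Or.inr (le_refl _))]
  congr 1
  apply Finset.sum_congr rfl
  intro t _
  rw [h _ (Or.inr (by have := t.2; omega))]

noncomputable def rebuild (F : Type) [Field F] (σ : ℕ) (c : Fin σ → F) (p f : ℕ → F) : ℕ → F
  | i =>
    if h : i < 2*σ then p i
    else f (i - 2*σ) + ∑ t : Fin σ, c t * rebuild F σ c p f (i - σ + t.1)
  termination_by i => i
  decreasing_by
    have := t.2; omega

lemma rebuild_lt {σ : ℕ} {c : Fin σ → F} {p f : ℕ → F} {i : ℕ} (h : i < 2*σ) :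
    rebuild F σ c p f i = p i := by
  rw [rebuild, dif_pos h]

lemma rebuild_ge {σ : ℕ} {c : Fin σ → F} {p f : ℕ → F} {i : ℕ} (h : ¬ i < 2*σ) :
    rebuild F σ c p f i = f (i - 2*σ) + ∑ t : Fin σ, c t * rebuild F σ c p f (i - σ + t.1) := by
  conv_lhs => rw [rebuild]
  rw [dif_neg h]

/-- The core bijective counting lemma: sequences of length `N+1` whose σ×σ Hankel
minor is invertible are parametrized by (prefix of length 2σ, defect vector). -/
lemma core_card (σ M : ℕ) (h2σ : 2*σ ≤ M)
    (P : (Fin (2*σ) → F) → Prop) (T : (Fin (M - 2*σ) → F) → Prop) :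
    Nat.card {α : Fin M → F //
        (hankel F σ σ (extP F M α)).det ≠ 0 ∧
        P (fun i => α (Fin.castLE h2σ i)) ∧
        T (fun k => dft F σ (extP F M α) (σ + k.1)) }
      = Nat.card {p : Fin (2*σ) → F // (hankel F σ σ (extP F (2*σ) p)).det ≠ 0 ∧ P p}
        * Nat.card {f : Fin (M - 2*σ) → F // T f} := by
  rw [← Nat.card_prod]
  apply Nat.card_congr
  -- agreement between extSeq and prefix
  have hagree : ∀ (α : Fin M → F) (i : ℕ), i < 2*σ →
      extP F M α i = extP F (2*σ) (fun j => α (Fin.castLE h2σ j)) i := by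
    intro α i hi
    rw [extP, extP, dif_pos (show i < M by omega), dif_pos hi]
    rfl
  -- the reconstruction of a sequence from prefix and defects
  have hrecon : ∀ (α : Fin M → F),
      (hankel F σ σ (extP F M α)).det ≠ 0 → ∀ i, i < M →
      rebuild F σ (cvec F σ (extP F (2*σ) (fun j => α (Fin.castLE h2σ j))))
        (extP F (2*σ) (fun j => α (Fin.castLE h2σ j)))
        (extP F (M - 2*σ) (fun k => dft F σ (extP F M α) (σ + k.1))) i
      = extP F M α i := by
    intro α hdet i
    induction i using Nat.strong_induction_on with
    | _ i ih =>
      intro hiN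
      by_cases hi : i < 2*σ
      · rw [rebuild_lt hi, ← hagree α i hi]
      · rw [rebuild_ge hi]
        have hc : cvec F σ (extP F (2*σ) (fun j => α (Fin.castLE h2σ j)))
            = cvec F σ (extP F M α) :=
          cvec_congr (fun j hj => (hagree α j hj).symm)
        have hf : extP F (M - 2*σ) (fun k => dft F σ (extP F M α) (σ + k.1)) (i - 2*σ)
            = dft F σ (extP F M α) (i - σ) := by
          rw [extP, dif_pos (by omega)]
          simp only [Fin.val_mk]
          congr 1
          omega
        rw [hc, hf]
        have hsum : ∀ t : Fin σ,
            rebuild F σ (cvec F σ (extP F M α))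
              (extP F (2*σ) (fun j => α (Fin.castLE h2σ j)))
              (extP F (M - 2*σ) (fun k => dft F σ (extP F M α) (σ + k.1))) (i - σ + t.1)
            = extP F M α (i - σ + t.1) := by
          intro t
          have ht := t.2
          have h1 : i - σ + t.1 < i := by omega
          rw [← hc]
          exact ih _ h1 (by omega)
        rw [Finset.sum_congr rfl (fun t _ => by rw [hsum t])]
        simp only [dft]
        rw [show i - σ + σ = i by omega]
        ring
  refine Equiv.mk
    (fun α => (⟨fun j => α.1 (Fin.castLE h2σ j), ?_, α.2.2.1⟩,
               ⟨fun k => dft F σ (extP F M α.1) (σ + k.1), α.2.2.2⟩))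
    (fun pf => ⟨fun i => rebuild F σ (cvec F σ (extP F (2*σ) pf.1.1)) (extP F (2*σ) pf.1.1)
        (extP F (M - 2*σ) pf.2.1) i.1, ?_⟩)
    ?_ ?_
  · -- det condition transfers to the prefix
    rw [hankel_congr (fun i hi => (hagree α.1 i hi).symm)]
    exact α.2.1
  · -- membership for the inverse map
    rcases pf with ⟨⟨p, hdetp, hP⟩, ⟨f, hT⟩⟩
    set β := rebuild F σ (cvec F σ (extP F (2*σ) p)) (extP F (2*σ) p) (extP F (M - 2*σ) f)
      with hβ
    have hpre : ∀ i, i < 2*σ → extP F M (fun i : Fin M => β i.1) i = extP F (2*σ) p i := by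
      intro i hi
      rw [extP, dif_pos (by omega)]
      exact rebuild_lt hi
    have hdet' : (hankel F σ σ (extP F M (fun i : Fin M => β i.1))).det ≠ 0 := by
      rw [hankel_congr hpre]; exact hdetp
    refine ⟨hdet', ?_, ?_⟩
    · have hthis : (fun j : Fin (2*σ) => β (Fin.castLE h2σ j).1) = p := by
        funext j
        rw [hβ, rebuild_lt (show (Fin.castLE h2σ j).1 < 2*σ from j.2), extP,
          dif_pos (show (Fin.castLE h2σ j).1 < 2*σ from j.2)]
        exact congrArg p (Fin.ext rfl)
      rw [show (fun j : Fin (2*σ) => (fun i : Fin M => β i.1) (Fin.castLE h2σ j)) =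
        (fun j : Fin (2*σ) => β (Fin.castLE h2σ j).1) from rfl, hthis]
      exact hP
    · have hdd : (fun k : Fin (M - 2*σ) =>
          dft F σ (extP F M (fun i : Fin M => β i.1)) (σ + k.1)) = f := by
        funext k
        have hk := k.2
        have hstep1 : dft F σ (extP F M (fun i : Fin M => β i.1)) (σ + k.1)
            = dft F σ β (σ + k.1) := by
          apply dft_congr
          intro i hi
          have hiN : i < M := by omega
          rw [extP, dif_pos hiN]
        rw [hstep1, dft]
        have hcβ : cvec F σ β = cvec F σ (extP F (2*σ) p) :=
          cvec_congr (fun j hj => rebuild_lt hj)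
        have hr := rebuild_ge (σ := σ) (c := cvec F σ (extP F (2*σ) p)) (p := extP F (2*σ) p)
          (f := extP F (M - 2*σ) f) (i := 2*σ + k.1) (by omega)
        rw [← hβ] at hr
        have h1 : β (σ + k.1 + σ) = β (2*σ + k.1) := by congr 1; omega
        have h2 : extP F (M - 2*σ) f (2*σ + k.1 - 2*σ) = f k := by
          rw [extP, dif_pos (by omega)]
          congr 1
          apply Fin.ext
          simp only [Fin.val_mk]
          omega
        rw [h1, hr, h2, hcβ]
        have h3 : ∀ t : Fin σ, β (2*σ + k.1 - σ + t.1) = β (σ + k.1 + t.1) := by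
          intro t; congr 1; omega
        rw [Finset.sum_congr rfl (fun t _ => by rw [h3 t])]
        ring
      rw [hdd]
      exact hT
  · -- left inverse
    rintro ⟨α, hdet, hP, hT⟩
    apply Subtype.ext
    funext i
    simp only
    exact (hrecon α hdet i.1 i.2).trans (by rw [extP, dif_pos i.2])
  · -- right inverse
    rintro ⟨⟨p, hdetp, hP⟩, ⟨f, hT⟩⟩
    simp only
    set β := rebuild F σ (cvec F σ (extP F (2*σ) p)) (extP F (2*σ) p) (extP F (M - 2*σ) f)
      with hβ
    have hpre : ∀ i, i < 2*σ → extP F M (fun i : Fin M => β i.1) i = extP F (2*σ) p i := by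
      intro i hi
      rw [extP, dif_pos (by omega)]
      exact rebuild_lt hi
    refine Prod.ext (Subtype.ext ?_) (Subtype.ext ?_)
    · funext j
      simp only
      rw [rebuild_lt (show (Fin.castLE h2σ j).1 < 2*σ from j.2), extP,
        dif_pos (show (Fin.castLE h2σ j).1 < 2*σ from j.2)]
      exact congrArg p (Fin.ext rfl)
    · funext k
      simp only
      have hk := k.2
      have hstep1 : dft F σ (extP F M (fun i : Fin M => β i.1)) (σ + k.1)
          = dft F σ β (σ + k.1) := by
        apply dft_congr
        intro i hi
        have hiN : i < M := by omega
        rw [extP, dif_pos hiN]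
      rw [hstep1, dft]
      have hcβ : cvec F σ β = cvec F σ (extP F (2*σ) p) :=
        cvec_congr (fun j hj => rebuild_lt hj)
      have hr := rebuild_ge (σ := σ) (c := cvec F σ (extP F (2*σ) p)) (p := extP F (2*σ) p)
        (f := extP F (M - 2*σ) f) (i := 2*σ + k.1) (by omega)
      rw [← hβ] at hr
      have h1 : β (σ + k.1 + σ) = β (2*σ + k.1) := by congr 1; omega
      have h2 : extP F (M - 2*σ) f (2*σ + k.1 - 2*σ) = f k := by
        rw [extP, dif_pos (by omega)]
        congr 1
        apply Fin.ext
        simp only [Fin.val_mk]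
        omega
      rw [h1, hr, h2, hcβ]
      have h3 : ∀ t : Fin σ, β (2*σ + k.1 - σ + t.1) = β (σ + k.1 + t.1) := by
        intro t; congr 1; omega
      rw [Finset.sum_congr rfl (fun t _ => by rw [h3 t])]
      ring

end S5
section S6
variable {F : Type} [Field F] [Fintype F]

lemma card_nonzero : Nat.card {x : F // x ≠ 0} = Fintype.card F - 1 := by
  classical
  rw [Nat.card_congr (unitsEquivNeZero (G₀ := F)).symm, Nat.card_eq_fintype_card,
    Fintype.card_units]

lemma card_tail_pattern (L j : ℕ) (hj : j < L) :
    Nat.card {f : Fin L → F // ∀ k : Fin L, (k.1 < j → f k = 0) ∧ (k.1 = j → f k ≠ 0)}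
      = (Fintype.card F - 1) * Fintype.card F ^ (L - 1 - j) := by
  classical
  have e : {f : Fin L → F // ∀ k : Fin L, (k.1 < j → f k = 0) ∧ (k.1 = j → f k ≠ 0)}
      ≃ {x : F // x ≠ 0} × (Fin (L - 1 - j) → F) := by
    refine Equiv.mk
      (fun f => (⟨f.1 ⟨j, hj⟩, (f.2 ⟨j, hj⟩).2 rfl⟩,
        fun t => f.1 ⟨j + 1 + t.1, by have := t.2; omega⟩))
      (fun xg => ⟨fun k => if hk : k.1 < j then 0 else if hk2 : k.1 = j then xg.1.1
        else xg.2 ⟨k.1 - j - 1, by have := k.2; omega⟩, ?_⟩) ?_ ?_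
    · intro k
      constructor
      · intro hk; simp only [dif_pos hk]
      · intro hk
        simp only [dif_neg (show ¬ k.1 < j by omega), dif_pos hk]
        exact xg.1.2
    · rintro ⟨f, hf⟩
      apply Subtype.ext
      funext k
      simp only
      by_cases hk : k.1 < j
      · rw [dif_pos hk]
        exact ((hf k).1 hk).symm
      · by_cases hk2 : k.1 = j
        · rw [dif_neg hk, dif_pos hk2]
          exact congrArg f (Fin.ext hk2.symm)
        · rw [dif_neg hk, dif_neg hk2]
          exact congrArg f (Fin.ext (by simp only [Fin.val_mk]; omega))
    · rintro ⟨⟨x, hx⟩, g⟩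
      refine Prod.ext (Subtype.ext ?_) ?_
      · simp only
        rw [dif_neg (by omega)]
        exact dif_pos trivial
      · funext t
        simp only
        rw [dif_neg (by omega), dif_neg (by omega)]
        exact congrArg g (Fin.ext (by simp only [Fin.val_mk]; omega))
  rw [Nat.card_congr e, Nat.card_prod, card_nonzero, Nat.card_eq_fintype_card,
    Fintype.card_fun, Fintype.card_fin]

lemma card_tail_zero (L : ℕ) :
    Nat.card {f : Fin L → F // ∀ k : Fin L, f k = 0} = 1 := by
  haveI : Unique {f : Fin L → F // ∀ k : Fin L, f k = 0} :=
    ⟨⟨⟨fun _ => 0, fun _ => rfl⟩⟩, by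
      rintro ⟨g, hg⟩
      exact Subtype.ext (funext fun k => hg k)⟩
  exact Nat.card_unique

lemma geom_nat (q m : ℕ) (hq : 1 ≤ q) :
    (q - 1) * (Finset.range m).sum (fun t => q ^ t) + 1 = q ^ m := by
  obtain ⟨Q, rfl⟩ : ∃ Q, q = Q + 1 := ⟨q - 1, by omega⟩
  induction m with
  | zero => simp
  | succ m ih =>
    rw [Finset.sum_range_succ, Nat.mul_add, pow_succ]
    simp only [Nat.add_sub_cancel] at ih ⊢
    calc Q * ∑ x ∈ Finset.range m, (Q+1)^x + Q * (Q+1)^m + 1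
        = (Q * ∑ x ∈ Finset.range m, (Q+1)^x + 1) + Q * (Q+1)^m := by ring
      _ = (Q+1)^m + Q*(Q+1)^m := by rw [ih]
      _ = (Q+1)^m * (Q+1) := by ring

end S6
section S7
variable {F : Type} [Field F]

lemma dft_zero_eq (γ : ℕ → F) (k : ℕ) : dft F 0 γ k = γ k := by
  simp [dft]

lemma sSup_det_eq_iff (γ : ℕ → F) (bnd r : ℕ) (hr : r ≤ bnd) :
    sSup {l | l ≤ bnd ∧ (hankel F l l γ).det ≠ 0} = r ↔
      ((hankel F r r γ).det ≠ 0 ∧ ∀ l, r < l → l ≤ bnd → (hankel F l l γ).det = 0) := by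
  have hne : {l | l ≤ bnd ∧ (hankel F l l γ).det ≠ 0}.Nonempty :=
    ⟨0, ⟨Nat.zero_le _, det_hankel_zero_fin⟩⟩
  have hbdd : BddAbove {l | l ≤ bnd ∧ (hankel F l l γ).det ≠ 0} :=
    ⟨bnd, fun x hx => hx.1⟩
  constructor
  · intro h
    have hmem := Nat.sSup_mem hne hbdd
    rw [h] at hmem
    refine ⟨hmem.2, fun l hl hln => ?_⟩
    by_contra hdl
    have : l ≤ r := by
      rw [← h]
      exact le_csSup hbdd ⟨hln, hdl⟩
    omega
  · rintro ⟨h1, h2⟩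
    apply le_antisymm
    · apply csSup_le hne
      intro l hl
      by_contra hc
      exact hl.2 (h2 l (by omega) hl.1)
    · exact le_csSup hbdd ⟨hr, h1⟩

lemma char_prefix (σ ρ : ℕ) (γ : ℕ → F) (hσρ : σ ≤ ρ - 1) (hρ : 1 ≤ ρ) :
    ((hankel F ρ ρ γ).det ≠ 0 ∧ sSup {l | l ≤ ρ-1 ∧ (hankel F l l γ).det ≠ 0} = σ) ↔
      ((hankel F σ σ γ).det ≠ 0 ∧ (∀ k, k < ρ-1 → dft F σ γ k = 0) ∧
        dft F σ γ (ρ-1) ≠ 0) := by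
  constructor
  · rintro ⟨hdρ, hsup⟩
    obtain ⟨hdσ, hmax⟩ := (sSup_det_eq_iff γ (ρ-1) σ hσρ).mp hsup
    refine ⟨hdσ, ?_⟩
    classical
    have hex : ∃ k, dft F σ γ k ≠ 0 := by
      by_contra hc
      push_neg at hc
      exact hdρ (det_hankel_zero (by omega) (fun k _ => hc k))
    set k₀ := Nat.find hex with hk₀def
    have hnz : dft F σ γ k₀ ≠ 0 := Nat.find_spec hex
    have hmin : ∀ k, k < k₀ → dft F σ γ k = 0 := by
      intro k hk
      by_contra hc
      exact absurd (Nat.find_min' hex hc) (by omega)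
    have hk₀σ : σ ≤ k₀ := by
      by_contra hc
      exact hnz (dft_eq_zero_of_lt hdσ (by omega))
    have hk₀ρ : k₀ ≤ ρ - 1 := by
      by_contra hc
      exact hdρ (det_hankel_zero (by omega) (fun k hk => hmin k (by omega)))
    have hk₀eq : k₀ = ρ - 1 := by
      by_contra hc
      have hd := det_hankel_dev hdσ hk₀σ hmin hnz
      exact hd (hmax (k₀+1) (by omega) (by omega))
    rw [← hk₀eq]
    exact ⟨hmin, hnz⟩
  · rintro ⟨hdσ, hz, hnz⟩
    have hdρ : (hankel F ρ ρ γ).det ≠ 0 := by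
      have := det_hankel_dev hdσ (by omega) hz hnz
      rw [show ρ - 1 + 1 = ρ by omega] at this
      exact this
    refine ⟨hdρ, (sSup_det_eq_iff γ (ρ-1) σ hσρ).mpr ⟨hdσ, fun l hl hln => ?_⟩⟩
    exact det_hankel_zero hl (fun k hk => hz k (by omega))

variable [Fintype F]

lemma card_filter_eq_nat_card {α : Type} [Fintype α] (pred : α → Prop) [DecidablePred pred] :
    (Finset.univ.filter pred).card = Nat.card {x // pred x} := by
  rw [Nat.card_eq_fintype_card, Fintype.card_subtype]

lemma card_prefix (h : ℕ) : ∀ ρ : ℕ, h < ρ →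
    Nat.card {p : Fin (2*ρ) → F //
        (hankel F ρ ρ (extP F (2*ρ) p)).det ≠ 0 ∧ (∀ i : Fin (2*ρ), i.1 < h → p i = 0)}
      = (Fintype.card F - 1) * Fintype.card F ^ (2*ρ - 1 - h) := by
  intro ρ
  induction ρ using Nat.strong_induction_on with
  | _ ρ ih =>
    intro hh
    classical
    set q := Fintype.card F with hq
    have hq1 : 1 ≤ q := Fintype.card_pos
    set D : (Fin (2*ρ) → F) → Prop := fun p =>
      (hankel F ρ ρ (extP F (2*ρ) p)).det ≠ 0 ∧ (∀ i : Fin (2*ρ), i.1 < h → p i = 0)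
      with hD
    set sf : (Fin (2*ρ) → F) → ℕ := fun p =>
      sSup {l | l ≤ ρ-1 ∧ (hankel F l l (extP F (2*ρ) p)).det ≠ 0} with hsf
    have hsfle : ∀ p, sf p ≤ ρ - 1 := by
      intro p
      simp only [hsf]
      exact csSup_le ⟨0, ⟨Nat.zero_le _, det_hankel_zero_fin⟩⟩ (fun l hl => hl.1)
    rw [← card_filter_eq_nat_card D]
    rw [Finset.card_eq_sum_card_fiberwise (f := sf) (t := Finset.range ρ)
      (fun p _ => Finset.mem_range.mpr (by have := hsfle p; omega))]
    -- compute each fiber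
    have hfib : ∀ σ ∈ Finset.range ρ,
        ((Finset.univ.filter D).filter (fun p => sf p = σ)).card =
        (if σ = 0 then (q - 1) * q ^ ρ else if σ ≤ h then 0
          else ((q - 1) * q ^ (2*σ - 1 - h)) * ((q - 1) * q ^ (ρ - σ))) := by
      intro σ hsmem
      have hσρ : σ < ρ := Finset.mem_range.mp hsmem
      rw [Finset.filter_filter, card_filter_eq_nat_card]
      by_cases hσ0 : σ = 0
      · subst hσ0
        rw [if_pos rfl]
        have h2σ : 2*0 ≤ 2*ρ := by omega
        have hiff : ∀ p : Fin (2*ρ) → F, (D p ∧ sf p = 0) ↔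
            ((hankel F 0 0 (extP F (2*ρ) p)).det ≠ 0 ∧
              (fun pr : Fin (2*0) → F => True) (fun i => p (Fin.castLE h2σ i)) ∧
              (fun f : Fin (2*ρ - 2*0) → F => ∀ k : Fin (2*ρ - 2*0),
                (k.1 < ρ-1-0 → f k = 0) ∧ (k.1 = ρ-1-0 → f k ≠ 0))
                (fun k => dft F 0 (extP F (2*ρ) p) (0 + k.1))) := by
          intro p
          simp only
          constructor
          · rintro ⟨⟨hdρ, hz⟩, hsup⟩
            obtain ⟨hd0, hz', hnz⟩ := (char_prefix 0 ρ (extP F (2*ρ) p)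
              (by omega) (by omega)).mp ⟨hdρ, hsup⟩
            refine ⟨det_hankel_zero_fin, trivial, fun k => ⟨fun hk => ?_, fun hk => ?_⟩⟩
            · rw [show 0 + k.1 = k.1 by omega]
              exact hz' k.1 (by omega)
            · rw [show 0 + k.1 = ρ - 1 by omega]
              exact hnz
          · rintro ⟨-, -, hT⟩
            have hpat : (∀ k, k < ρ-1 → dft F 0 (extP F (2*ρ) p) k = 0) ∧
                dft F 0 (extP F (2*ρ) p) (ρ-1) ≠ 0 := by
              constructor
              · intro k hk
                have := (hT ⟨k, by omega⟩).1 (by simp only [Fin.val_mk]; omega)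
                rwa [show 0 + k = k by omega] at this
              · have := (hT ⟨ρ-1, by omega⟩).2 (by simp only [Fin.val_mk]; omega)
                rwa [show 0 + (ρ-1) = ρ-1 by omega] at this
            obtain ⟨hdρ, hsup⟩ := (char_prefix 0 ρ (extP F (2*ρ) p)
              (by omega) (by omega)).mpr ⟨det_hankel_zero_fin, hpat.1, hpat.2⟩
            refine ⟨⟨hdρ, fun i hi => ?_⟩, hsup⟩
            have h1 := hpat.1 i.1 (by omega)
            rw [dft_zero_eq] at h1
            rw [extP, dif_pos i.2] at h1
            rw [← h1]
        rw [Nat.card_congr (Equiv.subtypeEquivRight hiff)]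
        rw [core_card 0 (2*ρ) h2σ (fun pr : Fin (2*0) → F => True)
          (fun f : Fin (2*ρ - 2*0) → F => ∀ k : Fin (2*ρ - 2*0),
            (k.1 < ρ-1-0 → f k = 0) ∧ (k.1 = ρ-1-0 → f k ≠ 0))]
        have hcard1 : Nat.card {p : Fin (2*0) → F //
            (hankel F 0 0 (extP F (2*0) p)).det ≠ 0 ∧
            (fun pr : Fin (2*0) → F => True) p} = 1 := by
          haveI : Unique {p : Fin (2*0) → F //
              (hankel F 0 0 (extP F (2*0) p)).det ≠ 0 ∧
              (fun pr : Fin (2*0) → F => True) p} :=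
            ⟨⟨⟨fun _ => 0, ⟨det_hankel_zero_fin, trivial⟩⟩⟩, by
              rintro ⟨g, hg⟩
              refine Subtype.ext (funext fun i => ?_)
              exact absurd i.2 (by omega)⟩
          exact Nat.card_unique
        rw [hcard1, one_mul]
        rw [Nat.card_congr (Equiv.subtypeEquivRight (fun f => Iff.rfl)),
          card_tail_pattern (2*ρ - 2*0) (ρ-1-0) (by omega)]
        rw [← hq, show 2*ρ - 2*0 - 1 - (ρ-1-0) = ρ by omega]
      · by_cases hσh : σ ≤ h
        · rw [if_neg hσ0, if_pos hσh]
          have : ∀ p : Fin (2*ρ) → F, ¬ (D p ∧ sf p = σ) := by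
            rintro p ⟨⟨hdρ, hz⟩, hsup⟩
            have hdσ := ((sSup_det_eq_iff (extP F (2*ρ) p) (ρ-1) σ (by omega)).mp hsup).1
            apply hdσ
            apply Matrix.det_eq_zero_of_row_eq_zero ⟨0, by omega⟩
            intro j
            show extP F (2*ρ) p ((0:ℕ) + j.1) = 0
            rw [extP, dif_pos (by have := j.2; omega)]
            exact hz _ (by simp only [Fin.val_mk]; omega)
          rw [Nat.card_eq_zero]
          left
          rw [isEmpty_subtype]
          exact this
        · rw [if_neg hσ0, if_neg hσh]
          have h2σ : 2*σ ≤ 2*ρ := by omega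
          have hiff : ∀ p : Fin (2*ρ) → F, (D p ∧ sf p = σ) ↔
              ((hankel F σ σ (extP F (2*ρ) p)).det ≠ 0 ∧
                (fun pr : Fin (2*σ) → F => ∀ i : Fin (2*σ), i.1 < h → pr i = 0)
                  (fun i => p (Fin.castLE h2σ i)) ∧
                (fun f : Fin (2*ρ - 2*σ) → F => ∀ k : Fin (2*ρ - 2*σ),
                  (k.1 < ρ-1-σ → f k = 0) ∧ (k.1 = ρ-1-σ → f k ≠ 0))
                  (fun k => dft F σ (extP F (2*ρ) p) (σ + k.1))) := by
            intro p
            simp only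
            constructor
            · rintro ⟨⟨hdρ, hz⟩, hsup⟩
              obtain ⟨hdσ, hz', hnz⟩ := (char_prefix σ ρ (extP F (2*ρ) p)
                (by omega) (by omega)).mp ⟨hdρ, hsup⟩
              refine ⟨hdσ, fun i hi => hz _ (by simp only [Fin.coe_castLE]; omega),
                fun k => ⟨fun hk => hz' _ (by omega), fun hk => ?_⟩⟩
              rw [show σ + k.1 = ρ - 1 by omega]
              exact hnz
            · rintro ⟨hdσ, hP, hT⟩
              have hpat : (∀ k, k < ρ-1 → dft F σ (extP F (2*ρ) p) k = 0) ∧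
                  dft F σ (extP F (2*ρ) p) (ρ-1) ≠ 0 := by
                constructor
                · intro k hk
                  by_cases hkσ : k < σ
                  · exact dft_eq_zero_of_lt hdσ hkσ
                  · have := (hT ⟨k - σ, by omega⟩).1 (by simp only [Fin.val_mk]; omega)
                    rwa [show σ + (k - σ) = k by omega] at this
                · have := (hT ⟨ρ-1-σ, by omega⟩).2 (by simp only [Fin.val_mk])
                  rwa [show σ + (ρ-1-σ) = ρ-1 by omega] at this
              obtain ⟨hdρ, hsup⟩ := (char_prefix σ ρ (extP F (2*ρ) p)
                (by omega) (by omega)).mpr ⟨hdσ, hpat.1, hpat.2⟩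
              refine ⟨⟨hdρ, fun i hi => ?_⟩, hsup⟩
              have := hP ⟨i.1, by omega⟩ (by simp only [Fin.val_mk]; omega)
              rw [show p (Fin.castLE h2σ ⟨i.1, by omega⟩) = p i from
                congrArg p (Fin.ext rfl)] at this
              exact this
          rw [Nat.card_congr (Equiv.subtypeEquivRight hiff)]
          rw [core_card σ (2*ρ) h2σ
            (fun pr : Fin (2*σ) → F => ∀ i : Fin (2*σ), i.1 < h → pr i = 0)
            (fun f : Fin (2*ρ - 2*σ) → F => ∀ k : Fin (2*ρ - 2*σ),
              (k.1 < ρ-1-σ → f k = 0) ∧ (k.1 = ρ-1-σ → f k ≠ 0))]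
          rw [show Nat.card {p : Fin (2*σ) → F //
              (hankel F σ σ (extP F (2*σ) p)).det ≠ 0 ∧
              (fun pr : Fin (2*σ) → F => ∀ i : Fin (2*σ), i.1 < h → pr i = 0) p}
            = (q - 1) * q ^ (2*σ - 1 - h) from
              (Nat.card_congr (Equiv.subtypeEquivRight (fun p => Iff.rfl))).trans
                (ih σ hσρ (by omega))]
          rw [Nat.card_congr (Equiv.subtypeEquivRight (fun f => Iff.rfl)),
            card_tail_pattern (2*ρ - 2*σ) (ρ-1-σ) (by omega)]
          rw [← hq, show 2*ρ - 2*σ - 1 - (ρ-1-σ) = ρ - σ by omega]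
    rw [Finset.sum_congr rfl hfib]
    -- final arithmetic
    have hsplit : Finset.range ρ = insert 0 (Finset.Ico 1 ρ) := by
      ext x
      simp only [Finset.mem_range, Finset.mem_insert, Finset.mem_Ico]
      omega
    rw [hsplit, Finset.sum_insert (by simp), if_pos rfl,
      ← Finset.sum_Ico_consecutive _ (show 1 ≤ h+1 by omega) (show h+1 ≤ ρ by omega)]
    rw [Finset.sum_eq_zero (s := Finset.Ico 1 (h+1)) (fun σ hσ => by
      rw [Finset.mem_Ico] at hσ
      rw [if_neg (by omega), if_pos (by omega)]), zero_add]
    rw [Finset.sum_congr (g := fun σ => (q-1)*((q-1)*(q^ρ * q^(σ-(h+1))))) rfl (fun σ hσ => by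
      rw [Finset.mem_Ico] at hσ
      rw [if_neg (by omega), if_neg (by omega)]
      calc ((q - 1) * q ^ (2*σ - 1 - h)) * ((q - 1) * q ^ (ρ - σ))
          = (q-1)*((q-1)*(q^(2*σ-1-h) * q^(ρ-σ))) := by ring
        _ = (q-1)*((q-1)*(q^ρ * q^(σ-(h+1)))) := by
            rw [← pow_add, ← pow_add]
            exact congrArg (fun e => (q-1)*((q-1)* q^e)) (by omega))]
    rw [Finset.sum_Ico_eq_sum_range,
      Finset.sum_congr (g := fun t => (q-1)*((q-1)*(q^ρ * q^t))) rfl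
        (fun t _ => by rw [show h+1+t-(h+1) = t by omega])]
    have hfact : (∑ t ∈ Finset.range (ρ-(h+1)), (q-1)*((q-1)*(q^ρ*q^t)))
        = (q-1)*q^ρ * ((q-1) * ∑ t ∈ Finset.range (ρ-(h+1)), q^t) := by
      rw [Finset.mul_sum, Finset.mul_sum]
      apply Finset.sum_congr rfl
      intro t _
      ring
    rw [hfact]
    have hgeom := geom_nat q (ρ - (h+1)) hq1
    calc (q-1) * q^ρ + (q-1)*q^ρ * ((q-1) * (Finset.range (ρ-(h+1))).sum (fun t => q^t))
        = (q-1)*q^ρ * ((q-1) * (Finset.range (ρ-(h+1))).sum (fun t => q^t) + 1) := by ring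
      _ = (q-1)*q^ρ * q^(ρ-(h+1)) := by rw [hgeom]
      _ = (q-1) * q^(2*ρ - 1 - h) := by rw [mul_assoc, ← pow_add]; congr 2; omega

end S7
/-- the number of sequences `α ∈ F_q^{n+1}` with `α₀ = ⋯ = α_{h-1} = 0`,
`ρ(α) = ρ₁` and `π(α) = π₁` equals `(q-1)q^{2ρ₁-h-1}` if `π₁ = 0` and
`(q-1)² q^{2ρ₁+π₁-h-2}` if `π₁ > 0`. -/
theorem stmt_12 (F : Type) [Field F] [Fintype F] (n h ρ₁ π₁ : ℕ)
    (hh : h ≤ n + 1) (hρ1 : 1 ≤ ρ₁) (hρ2 : ρ₁ + 1 ≤ (n + 2) / 2) (hρh : h + 1 ≤ ρ₁)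
    (hπe : Even n → π₁ + ρ₁ + 1 ≤ (n + 2) / 2) (hπo : Odd n → π₁ + ρ₁ ≤ (n + 2) / 2) :
    {α : Fin (n + 1) → F | (∀ i : Fin (n + 1), (i : ℕ) < h → α i = 0) ∧
        rhoC F n (extSeq F n α) = ρ₁ ∧ piC F n (extSeq F n α) = π₁}.ncard =
      if π₁ = 0 then (Fintype.card F - 1) * Fintype.card F ^ (2 * ρ₁ - h - 1)
      else (Fintype.card F - 1) ^ 2 * Fintype.card F ^ (2 * ρ₁ + π₁ - h - 2) := by
  classical
  have hq1 : 1 ≤ Fintype.card F := Fintype.card_pos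
  have h2σ : 2*ρ₁ ≤ n + 1 := by omega
  rw [← Nat.card_coe_set_eq]
  by_cases hπ0 : π₁ = 0
  · subst hπ0
    rw [if_pos rfl]
    have hiff : ∀ α : Fin (n+1) → F,
        ((∀ i : Fin (n + 1), (i : ℕ) < h → α i = 0) ∧
          rhoC F n (extSeq F n α) = ρ₁ ∧ piC F n (extSeq F n α) = 0) ↔
        ((hankel F ρ₁ ρ₁ (extP F (n+1) α)).det ≠ 0 ∧
          (fun pr : Fin (2*ρ₁) → F => ∀ i : Fin (2*ρ₁), i.1 < h → pr i = 0)
            (fun i => α (Fin.castLE h2σ i)) ∧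
          (fun f : Fin (n+1 - 2*ρ₁) → F => ∀ k : Fin (n+1 - 2*ρ₁), f k = 0)
            (fun k => dft F ρ₁ (extP F (n+1) α) (ρ₁ + k.1))) := by
      intro α
      have hext : extSeq F n α = extP F (n+1) α := rfl
      simp only
      constructor
      · rintro ⟨hz, hrp⟩
        obtain ⟨hdet, hpat⟩ := (char_pi0 n ρ₁ (extSeq F n α) hρ2).mp hrp
        rw [hext] at hdet hpat
        refine ⟨hdet, fun i hi => hz _ (by simp only [Fin.coe_castLE]; omega), fun k => ?_⟩
        exact hpat _ (by have := k.2; omega)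
      · rintro ⟨hdet, hP, hT⟩
        have hpat : ∀ k, k ≤ n - ρ₁ → dft F ρ₁ (extP F (n+1) α) k = 0 := by
          intro k hk
          by_cases hkρ : k < ρ₁
          · exact dft_eq_zero_of_lt hdet hkρ
          · have := hT ⟨k - ρ₁, by omega⟩
            simp only [Fin.val_mk] at this
            rwa [show ρ₁ + (k - ρ₁) = k by omega] at this
        refine ⟨fun i hi => ?_, (char_pi0 n ρ₁ (extSeq F n α) hρ2).mpr ⟨by rw [hext]; exact hdet,
          by rw [hext]; exact hpat⟩⟩
        have := hP ⟨i.1, by omega⟩ (by simp only [Fin.val_mk]; omega)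
        rwa [show α (Fin.castLE h2σ ⟨i.1, by omega⟩) = α i from congrArg α (Fin.ext rfl)] at this
    refine Eq.trans (Nat.card_congr (Equiv.subtypeEquivRight hiff)) ?_
    rw [core_card ρ₁ (n+1) h2σ
      (fun pr : Fin (2*ρ₁) → F => ∀ i : Fin (2*ρ₁), i.1 < h → pr i = 0)
      (fun f : Fin (n+1 - 2*ρ₁) → F => ∀ k : Fin (n+1 - 2*ρ₁), f k = 0)]
    rw [show Nat.card {p : Fin (2*ρ₁) → F //
        (hankel F ρ₁ ρ₁ (extP F (2*ρ₁) p)).det ≠ 0 ∧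
        (fun pr : Fin (2*ρ₁) → F => ∀ i : Fin (2*ρ₁), i.1 < h → pr i = 0) p}
      = (Fintype.card F - 1) * Fintype.card F ^ (2*ρ₁ - 1 - h) from
        (Nat.card_congr (Equiv.subtypeEquivRight (fun p => Iff.rfl))).trans
          (card_prefix h ρ₁ (by omega))]
    rw [Nat.card_congr (Equiv.subtypeEquivRight (fun f => Iff.rfl)),
      card_tail_zero (n+1-2*ρ₁), mul_one]
    exact congrArg (fun e => (Fintype.card F - 1) * Fintype.card F ^ e) (by omega)
  · rw [if_neg hπ0]
    have hπ1 : 1 ≤ π₁ := by omega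
    have harith : (n+2)/2 + π₁ + ρ₁ ≤ n + 1 := by
      rcases Nat.even_or_odd n with he | ho
      · have h1 := hπe he
        have h2 := Nat.even_iff.mp he
        omega
      · have h1 := hπo ho
        have h2 := Nat.odd_iff.mp ho
        omega
    set j : ℕ := n + 1 - π₁ - 2*ρ₁ with hj
    have hk₀ : n + 1 - π₁ - ρ₁ = ρ₁ + j := by omega
    have hiff : ∀ α : Fin (n+1) → F,
        ((∀ i : Fin (n + 1), (i : ℕ) < h → α i = 0) ∧
          rhoC F n (extSeq F n α) = ρ₁ ∧ piC F n (extSeq F n α) = π₁) ↔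
        ((hankel F ρ₁ ρ₁ (extP F (n+1) α)).det ≠ 0 ∧
          (fun pr : Fin (2*ρ₁) → F => ∀ i : Fin (2*ρ₁), i.1 < h → pr i = 0)
            (fun i => α (Fin.castLE h2σ i)) ∧
          (fun f : Fin (n+1 - 2*ρ₁) → F => ∀ k : Fin (n+1 - 2*ρ₁),
            (k.1 < j → f k = 0) ∧ (k.1 = j → f k ≠ 0))
            (fun k => dft F ρ₁ (extP F (n+1) α) (ρ₁ + k.1))) := by
      intro α
      have hext : extSeq F n α = extP F (n+1) α := rfl
      simp only
      constructor
      · rintro ⟨hz, hrp⟩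
        obtain ⟨hdet, hpat, hnz⟩ := (char_pipos n ρ₁ π₁ (extSeq F n α) hρ2 hπ1 harith).mp hrp
        rw [hext] at hdet hpat hnz
        refine ⟨hdet, fun i hi => hz _ (by simp only [Fin.coe_castLE]; omega),
          fun k => ⟨fun hk => hpat _ (by omega), fun hk => ?_⟩⟩
        rw [show ρ₁ + k.1 = n + 1 - π₁ - ρ₁ by omega]
        exact hnz
      · rintro ⟨hdet, hP, hT⟩
        have hpat : ∀ k, k < n + 1 - π₁ - ρ₁ → dft F ρ₁ (extP F (n+1) α) k = 0 := by
          intro k hk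
          by_cases hkρ : k < ρ₁
          · exact dft_eq_zero_of_lt hdet hkρ
          · have := (hT ⟨k - ρ₁, by omega⟩).1 (by simp only [Fin.val_mk]; omega)
            rwa [show ρ₁ + (k - ρ₁) = k by omega] at this
        have hnz : dft F ρ₁ (extP F (n+1) α) (n + 1 - π₁ - ρ₁) ≠ 0 := by
          have := (hT ⟨j, by omega⟩).2 (by simp only [Fin.val_mk])
          rwa [show ρ₁ + j = n + 1 - π₁ - ρ₁ by omega] at this
        refine ⟨fun i hi => ?_, (char_pipos n ρ₁ π₁ (extSeq F n α) hρ2 hπ1 harith).mpr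
          ⟨by rw [hext]; exact hdet, by rw [hext]; exact hpat, by rw [hext]; exact hnz⟩⟩
        have := hP ⟨i.1, by omega⟩ (by simp only [Fin.val_mk]; omega)
        rwa [show α (Fin.castLE h2σ ⟨i.1, by omega⟩) = α i from congrArg α (Fin.ext rfl)] at this
    refine Eq.trans (Nat.card_congr (Equiv.subtypeEquivRight hiff)) ?_
    rw [core_card ρ₁ (n+1) h2σ
      (fun pr : Fin (2*ρ₁) → F => ∀ i : Fin (2*ρ₁), i.1 < h → pr i = 0)
      (fun f : Fin (n+1 - 2*ρ₁) → F => ∀ k : Fin (n+1 - 2*ρ₁),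
        (k.1 < j → f k = 0) ∧ (k.1 = j → f k ≠ 0))]
    rw [show Nat.card {p : Fin (2*ρ₁) → F //
        (hankel F ρ₁ ρ₁ (extP F (2*ρ₁) p)).det ≠ 0 ∧
        (fun pr : Fin (2*ρ₁) → F => ∀ i : Fin (2*ρ₁), i.1 < h → pr i = 0) p}
      = (Fintype.card F - 1) * Fintype.card F ^ (2*ρ₁ - 1 - h) from
        (Nat.card_congr (Equiv.subtypeEquivRight (fun p => Iff.rfl))).trans
          (card_prefix h ρ₁ (by omega))]
    rw [Nat.card_congr (Equiv.subtypeEquivRight (fun f => Iff.rfl)),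
      card_tail_pattern (n+1-2*ρ₁) j (by omega)]
    calc ((Fintype.card F - 1) * Fintype.card F ^ (2*ρ₁ - 1 - h)) *
          ((Fintype.card F - 1) * Fintype.card F ^ (n+1-2*ρ₁ - 1 - j))
        = (Fintype.card F - 1)^2 *
          (Fintype.card F ^ (2*ρ₁ - 1 - h) * Fintype.card F ^ (n+1-2*ρ₁ - 1 - j)) := by ring
      _ = (Fintype.card F - 1)^2 * Fintype.card F ^ (2 * ρ₁ + π₁ - h - 2) := by
          rw [← pow_add]
          exact congrArg (fun e => (Fintype.card F - 1)^2 * Fintype.card F ^ e) (by omega)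
end

section
/- Let q be a prime power and α = (α₀,...,αₙ) ∈ F_q^{n+1} with rank H_{n₁,n₂}(α) = r, ρ(α) = r, π(α) = 0, where 0 ≤ r ≤ n₁ - 1. Among the q extensions α' = (α₀,...,αₙ,α_{n+1}) ∈ F_q^{n+2}: exactly one value of α_{n+1} gives ρ(α') = r and π(α') = 0 (rank of the extended near-square Hankel matrix remains r), and the other q-1 values give ρ(α') = r and π(α') = 1 (rank r+1). Moreover, in the first case the characteristic polynomials are unchanged (A₁' = A₁, A₂' = A₂), while in the second case A₁' = A₁ and A₂' = βA₂ + T^{c₂-c₁}A₁ for some β ∈ F_q^*, with c₁ = r, c₂ = n+2-r, and the correspondence α_{n+1} ↔ β is a bijection. -/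
open Matrix Polynomial

/-!
Identify a vector of length `m` with a polynomial of degree `< m`; row `i` of a Hankel matrix
of `α` then acts as `hankelRow α i P = ∑ₖ α (i + k) Pₖ`. The first `l - 1` rows of
`H_{l,m}(α')` are the rows of `H_{l-1,m}(α)`, so the kernel of `H_{l,m}(α')` consists of the
`B₁A₁ + B₂A₂` with the old degree bounds on which the last row vanishes (for `l = 1` every
polynomial has such a representation, by coprimality). At every shift the last row reaches
except the top one, `A₁` and `A₂` satisfy the recurrences of `α`, so only the top coefficients
of `B₁` and `B₂` survive and the last row reads `B₁[top] s + B₂[top] d = 0`. Here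
`s = hankelRow α' (n+1-r) A₁` is affine in `α_{n+1}` with slope `lc A₁`, so `b = -s/d` is a
bijection, and `d = hankelRow α (r-1) A₂ ≠ 0` since `H_{r,r}(α)` is invertible. If `s = 0` the condition lowers the degree bound on `B₂`; otherwise, with
`β = -s/d`, substituting `B₁ = B₁' + β⁻¹ T^{c₂-c₁} B₂` turns it into the description by `A₁`
and `βA₂ + T^{c₂-c₁}A₁` with a lower bound on `B₁`. The rank of the near-square matrix is read
off from its kernel, and `ρ` stays `r` because an invertible `(r+1) × (r+1)` leading block of
`α'` is one of `α`, whose near-square matrix has rank `r`.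
-/

section

variable {F : Type} [Field F]

noncomputable def hankelRow (α : ℕ → F) (i : ℕ) : F[X] →ₗ[F] F :=
  lsum fun k => α (i + k) • LinearMap.id

lemma hankelRow_eq_sum_range (α : ℕ → F) (i : ℕ) {P : F[X]} {N : ℕ} (h : P.natDegree < N) :
    hankelRow α i P = ∑ k ∈ Finset.range N, α (i + k) * P.coeff k :=
  sum_over_range' P (fun _ => by simp) N h

lemma hankelRow_monomial (α : ℕ → F) (i j : ℕ) (b : F) :
    hankelRow α i (monomial j b) = α (i + j) * b :=
  sum_monomial_index b _ (by simp)

lemma hankelRow_monomial_mul (α : ℕ → F) (i j : ℕ) (b : F) (P : F[X]) :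
    hankelRow α i (monomial j b * P) = b * hankelRow α (i + j) P := by
  induction P using Polynomial.induction_on' with
  | add P Q hP hQ => rw [mul_add, map_add, map_add, hP, hQ, mul_add]
  | monomial k a =>
    rw [monomial_mul_monomial, hankelRow_monomial, hankelRow_monomial, add_assoc]
    ring

lemma hankelRow_mul (α : ℕ → F) (i : ℕ) (B P : F[X]) :
    hankelRow α i (B * P) = ∑ j ∈ B.support, B.coeff j * hankelRow α (i + j) P := by
  conv_lhs => rw [← B.sum_monomial_eq, Polynomial.sum_def, Finset.sum_mul, map_sum]
  simp only [hankelRow_monomial_mul]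

lemma hankelRow_congr {α α' : ℕ → F} {i : ℕ} {P : F[X]}
    (h : ∀ k ≤ P.natDegree, α (i + k) = α' (i + k)) : hankelRow α i P = hankelRow α' i P := by
  rw [hankelRow_eq_sum_range α i (Nat.lt_succ_self _),
    hankelRow_eq_sum_range α' i (Nat.lt_succ_self _)]
  exact Finset.sum_congr rfl fun k hk => by
    rw [h k (Nat.lt_succ_iff.1 (Finset.mem_range.1 hk))]

lemma hankel_mulVec_coeff {l m : ℕ} (α : ℕ → F) {P : F[X]} (hP : P.natDegree < m) :
    hankel F l m α *ᵥ (fun j : Fin m => P.coeff j) = fun i : Fin l => hankelRow α i P := by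
  ext i
  rw [hankelRow_eq_sum_range α i hP, ← Fin.sum_univ_eq_sum_range]
  rfl

lemma hankel_mulVec_coeff_eq_zero_iff {l m : ℕ} (α : ℕ → F) {P : F[X]} (hP : P.natDegree < m) :
    hankel F l m α *ᵥ (fun j : Fin m => P.coeff j) = 0 ↔ ∀ i < l, hankelRow α i P = 0 := by
  rw [hankel_mulVec_coeff α hP, funext_iff]
  exact ⟨fun h i hi => h ⟨i, hi⟩, fun h i => h i i.2⟩

lemma exists_natDegree_lt_coeff_eq {m : ℕ} (hm : 1 ≤ m) (v : Fin m → F) :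
    ∃ P : F[X], P.natDegree < m ∧ (fun j : Fin m => P.coeff j) = v := by
  set P : F[X] := ((degreeLTEquiv F m).symm v : F[X])
  refine ⟨P, ?_, (degreeLTEquiv F m).apply_symm_apply v⟩
  have hP : P.degree < m := mem_degreeLT.1 ((degreeLTEquiv F m).symm v).2
  by_cases h0 : P = 0
  · rw [h0, natDegree_zero]; omega
  · exact (natDegree_lt_iff_degree_lt h0).2 hP

lemma coeff_vec_inj {m : ℕ} {P Q : F[X]} (hP : P.natDegree < m) (hQ : Q.natDegree < m) :
    (fun j : Fin m => P.coeff j) = (fun j : Fin m => Q.coeff j) ↔ P = Q := by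
  refine ⟨fun h => Polynomial.ext fun k => ?_, fun h => h ▸ rfl⟩
  by_cases hk : k < m
  · exact congrFun h ⟨k, hk⟩
  · rw [coeff_eq_zero_of_natDegree_lt (by omega), coeff_eq_zero_of_natDegree_lt (by omega)]

lemma degLE_zero (k : ℤ) : degLE F 0 k := fun i _ => coeff_zero i

lemma eq_zero_of_degLE_of_neg {B : F[X]} {k : ℤ} (h : degLE F B k) (hk : k < 0) : B = 0 :=
  Polynomial.ext fun i => by rw [h i (by omega), coeff_zero]

lemma degLE_mono {B : F[X]} {k k' : ℤ} (h : degLE F B k) (hk : k ≤ k') : degLE F B k' :=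
  fun i hi => h i (by omega)

lemma degLE_of_natDegree_le {B : F[X]} {k : ℤ} (h : (B.natDegree : ℤ) ≤ k) : degLE F B k :=
  fun _ hi => coeff_eq_zero_of_natDegree_lt (by omega)

lemma natDegree_lt_of_degLE {B : F[X]} {m : ℕ} (h : degLE F B ((m : ℤ) - 1)) (hm : 1 ≤ m) :
    B.natDegree < m := by
  have : B.natDegree ≤ m - 1 :=
    natDegree_le_iff_coeff_eq_zero.2 fun i hi => h i (by omega)
  omega

lemma degLE_sub_one_iff_degree_lt {B : F[X]} {j : ℕ} :
    degLE F B ((j : ℤ) - 1) ↔ B.degree < j := by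
  rw [degree_lt_iff_coeff_zero]
  exact ⟨fun h i hi => h i (by omega), fun h i hi => h i (by omega)⟩

/-- For `k < 0` both sides force `B = 0`, so the junk value `k.toNat = 0` is harmless; top
coefficients are read off with `toNat` in the same way below. -/
lemma degLE_sub_one_iff {B : F[X]} {k : ℤ} :
    degLE F B (k - 1) ↔ degLE F B k ∧ B.coeff k.toNat = 0 := by
  refine ⟨fun h => ⟨degLE_mono h (by omega), ?_⟩, fun ⟨h, hk⟩ i hi => ?_⟩
  · rcases lt_or_ge k 0 with hk | hk
    · rw [eq_zero_of_degLE_of_neg h (by omega), coeff_zero]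
    · exact h _ (by omega)
  · rcases eq_or_lt_of_le (Int.add_one_le_iff.2 (by omega : k - 1 < i)) with hik | hik
    · rw [show i = k.toNat by omega, hk]
    · exact h i (by omega)

lemma degLE_add {B B' : F[X]} {k : ℤ} (h : degLE F B k) (h' : degLE F B' k) :
    degLE F (B + B') k := fun i hi => by rw [coeff_add, h i hi, h' i hi, add_zero]

lemma degLE_sub {B B' : F[X]} {k : ℤ} (h : degLE F B k) (h' : degLE F B' k) :
    degLE F (B - B') k := fun i hi => by rw [coeff_sub, h i hi, h' i hi, sub_zero]

lemma degLE_C_mul {B : F[X]} {k : ℤ} (h : degLE F B k) (a : F) : degLE F (C a * B) k :=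
  fun i hi => by rw [coeff_C_mul, h i hi, mul_zero]

lemma degLE_mul {B A : F[X]} {k k' : ℤ} (h : degLE F B k) (h' : degLE F A k') :
    degLE F (B * A) (k + k') := by
  intro i hi
  rw [coeff_mul]
  refine Finset.sum_eq_zero fun x hx => ?_
  have hx := Finset.HasAntidiagonal.mem_antidiagonal.1 hx
  rcases lt_or_ge k x.1 with h1 | h1
  · rw [h _ h1, zero_mul]
  · rw [h' _ (by omega), mul_zero]

lemma degLE_X_pow_mul {B : F[X]} {k : ℤ} (h : degLE F B k) (g : ℕ) :
    degLE F (X ^ g * B) (k + g) := by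
  have hX : degLE F (X ^ g : F[X]) g := degLE_of_natDegree_le (by simp)
  exact degLE_mono (degLE_mul hX h) (by omega)

lemma coeff_X_pow_mul_toNat {B : F[X]} {k : ℤ} (h : degLE F B k) (g : ℕ) :
    (X ^ g * B).coeff (k + g).toNat = B.coeff k.toNat := by
  rcases lt_or_ge k 0 with hk | hk
  · simp [eq_zero_of_degLE_of_neg h hk]
  · rw [coeff_X_pow_mul', if_pos (by omega), show (k + g).toNat - g = k.toNat by omega]

lemma natDegree_le_of_degLE {B : F[X]} {k : ℤ} (h : degLE F B k) (hB : B ≠ 0) :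
    (B.natDegree : ℤ) ≤ k := by
  by_contra hk
  exact leadingCoeff_ne_zero.2 hB (h _ (by omega))

lemma degLE_of_degLE_mul_right {B A : F[X]} {k : ℤ} {d : ℕ} (h : degLE F (B * A) k)
    (hA : A ≠ 0) (hd : A.natDegree = d) : degLE F B (k - d) := by
  rcases eq_or_ne B 0 with rfl | hB
  · exact degLE_zero _
  · have := natDegree_le_of_degLE h (mul_ne_zero hB hA)
    rw [natDegree_mul hB hA, hd] at this
    exact degLE_of_natDegree_le (by omega)

def HasBoundedRep (A₁ A₂ : F[X]) (k₁ k₂ : ℤ) (P : F[X]) : Prop :=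
  ∃ B₁ B₂ : F[X], degLE F B₁ k₁ ∧ degLE F B₂ k₂ ∧ P = B₁ * A₁ + B₂ * A₂

lemma HasBoundedRep.degLE {A₁ A₂ P : F[X]} {k₁ k₂ d₁ d₂ K : ℤ}
    (h : HasBoundedRep A₁ A₂ k₁ k₂ P) (hA₁ : degLE F A₁ d₁) (hA₂ : degLE F A₂ d₂)
    (h₁ : k₁ + d₁ ≤ K) (h₂ : k₂ + d₂ ≤ K) : degLE F P K := by
  obtain ⟨B₁, B₂, hB₁, hB₂, rfl⟩ := h
  exact degLE_add (degLE_mono (degLE_mul hB₁ hA₁) h₁) (degLE_mono (degLE_mul hB₂ hA₂) h₂)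

lemma isCharSeq_iff {n r : ℕ} {A₁ A₂ : F[X]} {α : ℕ → F} (hA₁ : degLE F A₁ r)
    (hA₂ : degLE F A₂ ((n : ℤ) + 2 - r)) :
    IsCharSeq F n r A₁ A₂ α ↔ ∀ l m : ℕ, 1 ≤ l → 1 ≤ m → l + m = n + 2 →
      ∀ P : F[X], P.natDegree < m → ((∀ i < l, hankelRow α i P = 0) ↔
        HasBoundedRep A₁ A₂ ((m : ℤ) - r - 1) ((m : ℤ) - ((n : ℤ) + 2 - r) - 1) P) := by
  have hrep : ∀ {m : ℕ} {P : F[X]}, 1 ≤ m → P.natDegree < m →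
      ((∃ B₁ B₂ : F[X], degLE F B₁ ((m : ℤ) - r - 1) ∧
        degLE F B₂ ((m : ℤ) - ((n : ℤ) + 2 - r) - 1) ∧
        (fun j : Fin m => P.coeff j) = fun j : Fin m => (B₁ * A₁ + B₂ * A₂).coeff j) ↔
        HasBoundedRep A₁ A₂ ((m : ℤ) - r - 1) ((m : ℤ) - ((n : ℤ) + 2 - r) - 1) P) := by
    intro m P hm hP
    refine exists₂_congr fun B₁ B₂ => and_congr_right fun hB₁ => and_congr_right fun hB₂ => ?_
    refine coeff_vec_inj hP (natDegree_lt_of_degLE ?_ hm)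
    exact HasBoundedRep.degLE ⟨B₁, B₂, hB₁, hB₂, rfl⟩ hA₁ hA₂ (by omega) (by omega)
  refine forall₄_congr fun l m hl hm => forall_congr' fun hlm => ?_
  rw [Set.ext_iff]
  constructor
  · intro h P hP
    rw [← hankel_mulVec_coeff_eq_zero_iff α hP, ← hrep hm hP]
    exact h _
  · intro h v
    obtain ⟨P, hP, rfl⟩ := exists_natDegree_lt_coeff_eq hm v
    rw [Set.mem_ofPred_eq, Set.mem_ofPred_eq, hankel_mulVec_coeff_eq_zero_iff α hP, hrep hm hP]
    exact h P hP

lemma hasBoundedRep_of_isCoprime {r N : ℕ} {A₁ A₂ : F[X]} (hcop : IsCoprime A₁ A₂)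
    (hA₁ : A₁.degree = r) (hA₂ : A₂.degree < r) (hN : 2 * r ≤ N + 1) {P : F[X]}
    (hP : P.natDegree ≤ N) : HasBoundedRep A₁ A₂ ((N : ℤ) - r) ((r : ℤ) - 1) P := by
  obtain ⟨U, V, hUV⟩ := hcop
  have hA₁0 : A₁ ≠ 0 := by rintro rfl; simp at hA₁
  set B₂ := V * P % A₁
  set q := V * P / A₁
  have hB₂ : degLE F B₂ ((r : ℤ) - 1) :=
    degLE_sub_one_iff_degree_lt.2 (hA₁ ▸ degree_mod_lt _ hA₁0)
  have hdiv : P - B₂ * A₂ = (P * U + q * A₂) * A₁ := by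
    linear_combination (-A₂) * EuclideanDomain.mod_add_div (V * P) A₁ + (-P) * hUV
  refine ⟨P * U + q * A₂, B₂, ?_, hB₂, by linear_combination hdiv⟩
  have hA₂' : degLE F A₂ ((r : ℤ) - 1) := degLE_sub_one_iff_degree_lt.2 hA₂
  have hdeg : degLE F ((P * U + q * A₂) * A₁) N := by
    rw [← hdiv]
    exact degLE_sub (degLE_of_natDegree_le (by omega))
      (degLE_mono (degLE_mul hB₂ hA₂') (by omega))
  exact degLE_of_degLE_mul_right hdeg hA₁0 (natDegree_eq_of_degree_eq_some hA₁)

lemma hasBoundedRep_twist_iff {A₁ A₂ P : F[X]} {β : F} (hβ : β ≠ 0) (g : ℕ) (k : ℤ) :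
    (∃ B₁ B₂ : F[X], degLE F B₁ (k + g) ∧ degLE F B₂ k ∧ P = B₁ * A₁ + B₂ * A₂ ∧
        B₁.coeff (k + g).toNat = β⁻¹ * B₂.coeff k.toNat) ↔
      HasBoundedRep A₁ (C β * A₂ + X ^ g * A₁) (k + g - 1) k P := by
  constructor
  · rintro ⟨B₁, B₂, hB₁, hB₂, rfl, htop⟩
    refine ⟨B₁ - C β⁻¹ * (X ^ g * B₂), C β⁻¹ * B₂, degLE_sub_one_iff.2 ⟨?_, ?_⟩,
      degLE_C_mul hB₂ _, ?_⟩
    · exact degLE_sub hB₁ (degLE_C_mul (degLE_X_pow_mul hB₂ g) _)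
    · rw [coeff_sub, coeff_C_mul, coeff_X_pow_mul_toNat hB₂, htop, sub_self]
    · have hββ : C β⁻¹ * C β = (1 : F[X]) := by rw [← C_mul, inv_mul_cancel₀ hβ, C_1]
      linear_combination (-(B₂ * A₂)) * hββ
  · rintro ⟨B₁, B₂, hB₁, hB₂, rfl⟩
    refine ⟨B₁ + X ^ g * B₂, C β * B₂, degLE_add (degLE_mono hB₁ (by omega))
      (degLE_X_pow_mul hB₂ g), degLE_C_mul hB₂ _, by ring, ?_⟩
    rw [coeff_add, coeff_X_pow_mul_toNat hB₂, (degLE_sub_one_iff.1 hB₁).2, coeff_C_mul,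
      inv_mul_cancel_left₀ hβ, zero_add]

lemma degLE_twist {n r : ℕ} {A₁ A₂ : F[X]} (β : F) (hA₁ : degLE F A₁ r) (hA₂ : degLE F A₂ r)
    (h2r : 2 * r ≤ n) :
    degLE F (C β * A₂ + X ^ (n + 2 - 2 * r) * A₁) (((n + 1 : ℕ) : ℤ) + 2 - (r + 1 : ℕ)) :=
  degLE_mono (degLE_add (degLE_mono (degLE_C_mul hA₂ β) (by omega)) (degLE_X_pow_mul hA₁ _))
    (by push_cast; omega)

section CharSeq

variable {n r : ℕ} {α : ℕ → F} {A₁ A₂ : F[X]}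

lemma IsCharSeq.hankelRow_fst_eq_zero (hchar : IsCharSeq F n r A₁ A₂ α)
    (hA₁ : A₁.natDegree ≤ r) (hA₂ : A₂.natDegree ≤ r) (h2r : 2 * r ≤ n) {t : ℕ}
    (ht : t + r ≤ n) : hankelRow α t A₁ = 0 := by
  have hker := (isCharSeq_iff (degLE_of_natDegree_le (by omega))
    (degLE_of_natDegree_le (by omega))).1 hchar (n + 1 - r) (r + 1) (by omega) (by omega)
    (by omega) A₁ (by omega)
  refine hker.2 ⟨1, 0, degLE_of_natDegree_le ?_, degLE_zero _, by ring⟩ t (by omega)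
  simp

lemma IsCharSeq.hankelRow_snd_eq_zero (hchar : IsCharSeq F n r A₁ A₂ α)
    (hA₁ : A₁.natDegree ≤ r) (hA₂ : A₂.natDegree ≤ r) (h2r : 2 * r ≤ n) {t : ℕ}
    (ht : t + 2 ≤ r) : hankelRow α t A₂ = 0 := by
  have hker := (isCharSeq_iff (degLE_of_natDegree_le (by omega))
    (degLE_of_natDegree_le (by omega))).1 hchar (r - 1) (n + 3 - r) (by omega) (by omega)
    (by omega) A₂ (by omega)
  refine hker.2 ⟨0, 1, degLE_zero _, degLE_of_natDegree_le ?_, by ring⟩ t (by omega)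
  simp only [natDegree_one, Nat.cast_zero]
  omega

end CharSeq

lemma hankelRow_sub_one_ne_zero {n r : ℕ} {α : ℕ → F} {A₁ A₂ : F[X]} (hr : 1 ≤ r)
    (h2r : 2 * r ≤ n) (hcop : IsCoprime A₁ A₂) (hd₁ : A₁.degree = r) (hd₂ : A₂.degree < r)
    (hchar : IsCharSeq F n r A₁ A₂ α) (hdet : (hankel F r r α).det ≠ 0) :
    hankelRow α (r - 1) A₂ ≠ 0 := by
  intro h0
  have hA₂0 : A₂ ≠ 0 := by
    rintro rfl
    have := degree_eq_zero_of_isUnit (isCoprime_zero_right.1 hcop)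
    rw [hd₁] at this
    exact absurd (by exact_mod_cast this) (by omega : r ≠ 0)
  have hA₂ : A₂.natDegree < r := (natDegree_lt_iff_degree_lt hA₂0).2 hd₂
  have hker : hankel F r r α *ᵥ (fun j : Fin r => A₂.coeff j) = 0 := by
    refine (hankel_mulVec_coeff_eq_zero_iff α hA₂).2 fun i hi => ?_
    rcases lt_or_eq_of_le (Nat.le_sub_one_of_lt hi) with hi | rfl
    · exact IsCharSeq.hankelRow_snd_eq_zero hchar (natDegree_eq_of_degree_eq_some hd₁).le
        hA₂.le h2r (by omega)
    · exact h0
  have := eq_zero_of_mulVec_eq_zero hdet hker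
  rw [show (0 : Fin r → F) = fun j : Fin r => (0 : F[X]).coeff j from rfl,
    coeff_vec_inj hA₂ (by simp; omega)] at this
  exact hA₂0 this

lemma exists_ne_zero_eq_hankelRow_sub_one {n r : ℕ} {α : ℕ → F} {A₁ A₂ : F[X]} (h2r : 2 * r ≤ n)
    (hcop : IsCoprime A₁ A₂) (hd₁ : A₁.degree = r) (hd₂ : A₂.degree < r)
    (hchar : IsCharSeq F n r A₁ A₂ α) (hdet : (hankel F r r α).det ≠ 0) :
    ∃ d : F, d ≠ 0 ∧ (1 ≤ r → d = hankelRow α (r - 1) A₂) := by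
  -- for `r = 0` the polynomial `A₂` vanishes and any `d ≠ 0` will do
  rcases Nat.eq_zero_or_pos r with rfl | hr
  · exact ⟨1, one_ne_zero, fun h => absurd h (by omega)⟩
  · exact ⟨_, hankelRow_sub_one_ne_zero hr h2r hcop hd₁ hd₂ hchar hdet, fun _ => rfl⟩

lemma hankelRow_extendSeq {n i : ℕ} {α : ℕ → F} {c : F} {P : F[X]} (h : i + P.natDegree ≤ n) :
    hankelRow (extendSeq F n α c) i P = hankelRow α i P :=
  hankelRow_congr fun _ hk => if_neg (by omega)

lemma hankelRow_mul_of_degLE {α : ℕ → F} {i : ℕ} {A B : F[X]} {k : ℤ} (hB : degLE F B k)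
    (h : ∀ j : ℕ, (j : ℤ) < k → hankelRow α (i + j) A = 0) :
    hankelRow α i (B * A) = B.coeff k.toNat * hankelRow α (i + k.toNat) A := by
  rw [hankelRow_mul]
  refine Finset.sum_eq_single k.toNat (fun j hj hne => ?_) fun hk => ?_
  · have hjk : (j : ℤ) ≤ k := not_lt.1 fun hlt => mem_support_iff.1 hj (hB j hlt)
    rw [h j (by omega), mul_zero]
  · rw [notMem_support_iff.1 hk, zero_mul]

section Extension

variable {n r : ℕ} {α : ℕ → F} {A₁ A₂ : F[X]} {c d : F}

lemma hankelRow_extendSeq_last (h2r : 2 * r ≤ n) (hA₁ : A₁.natDegree ≤ r)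
    (hA₂ : A₂.natDegree ≤ r) (hchar : IsCharSeq F n r A₁ A₂ α)
    (hd : 1 ≤ r → d = hankelRow α (r - 1) A₂) {l m : ℕ} (hl : 1 ≤ l) (hlm : l + m = n + 3)
    {B₁ B₂ : F[X]} (hB₁ : degLE F B₁ ((m : ℤ) - r - 1))
    (hB₂ : degLE F B₂ ((m : ℤ) - ((n : ℤ) + 2 - r) - 1)) :
    hankelRow (extendSeq F n α c) (l - 1) (B₁ * A₁ + B₂ * A₂) =
      B₁.coeff ((m : ℤ) - r - 1).toNat * hankelRow (extendSeq F n α c) (n + 1 - r) A₁ +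
        B₂.coeff ((m : ℤ) - ((n : ℤ) + 2 - r) - 1).toNat * d := by
  rw [map_add, hankelRow_mul_of_degLE hB₁ fun j hj => ?_, hankelRow_mul_of_degLE hB₂ fun j hj => ?_]
  · congr 1
    · rcases lt_or_ge ((m : ℤ) - r - 1) 0 with hk | hk
      · simp [eq_zero_of_degLE_of_neg hB₁ hk]
      · rw [show l - 1 + ((m : ℤ) - r - 1).toNat = n + 1 - r by omega]
    · rcases lt_or_ge ((m : ℤ) - ((n : ℤ) + 2 - r) - 1) 0 with hk | hk
      · simp [eq_zero_of_degLE_of_neg hB₂ hk]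
      · rw [show l - 1 + ((m : ℤ) - ((n : ℤ) + 2 - r) - 1).toNat = r - 1 by omega,
          hankelRow_extendSeq (by omega), hd (by omega)]
  · rw [hankelRow_extendSeq (by omega : l - 1 + j + A₂.natDegree ≤ n)]
    exact IsCharSeq.hankelRow_snd_eq_zero hchar hA₁ hA₂ h2r (by omega)
  · rw [hankelRow_extendSeq (by omega : l - 1 + j + A₁.natDegree ≤ n)]
    exact IsCharSeq.hankelRow_fst_eq_zero hchar hA₁ hA₂ h2r (by omega)

lemma ker_hankel_extendSeq_iff (h2r : 2 * r ≤ n) (hcop : IsCoprime A₁ A₂)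
    (hd₁ : A₁.degree = r) (hd₂ : A₂.degree < r) (hchar : IsCharSeq F n r A₁ A₂ α)
    (hd : 1 ≤ r → d = hankelRow α (r - 1) A₂) {l m : ℕ} (hl : 1 ≤ l) (hlm : l + m = n + 3)
    {P : F[X]} (hP : P.natDegree < m) :
    (∀ i < l, hankelRow (extendSeq F n α c) i P = 0) ↔
      ∃ B₁ B₂ : F[X], degLE F B₁ ((m : ℤ) - r - 1) ∧
        degLE F B₂ ((m : ℤ) - ((n : ℤ) + 2 - r) - 1) ∧ P = B₁ * A₁ + B₂ * A₂ ∧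
        B₁.coeff ((m : ℤ) - r - 1).toNat * hankelRow (extendSeq F n α c) (n + 1 - r) A₁ +
          B₂.coeff ((m : ℤ) - ((n : ℤ) + 2 - r) - 1).toNat * d = 0 := by
  have hA₁ : A₁.natDegree ≤ r := (natDegree_eq_of_degree_eq_some hd₁).le
  have hA₂ : A₂.natDegree ≤ r := natDegree_le_of_degree_le hd₂.le
  have hold : (∀ i < l - 1, hankelRow α i P = 0) ↔
      HasBoundedRep A₁ A₂ ((m : ℤ) - r - 1) ((m : ℤ) - ((n : ℤ) + 2 - r) - 1) P := by
    -- for `l = 1` there are no old rows, and coprimality replaces the kernel description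
    rcases eq_or_lt_of_le hl with rfl | hl
    · have hrep := hasBoundedRep_of_isCoprime hcop hd₁ hd₂ (N := n + 1) (by omega)
        (P := P) (by omega)
      rw [show ((m : ℤ) - r - 1) = ((n + 1 : ℕ) : ℤ) - r by push_cast; omega,
        show ((m : ℤ) - ((n : ℤ) + 2 - r) - 1) = (r : ℤ) - 1 by omega]
      exact iff_of_true (fun i hi => absurd hi (by omega)) hrep
    · exact (isCharSeq_iff (degLE_of_natDegree_le (by omega))
        (degLE_of_natDegree_le (by omega))).1 hchar (l - 1) m (by omega) (by omega)
        (by omega) P hP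
  have hrows : ∀ i < l - 1, hankelRow (extendSeq F n α c) i P = hankelRow α i P :=
    fun i hi => hankelRow_extendSeq (by omega)
  constructor
  · intro h
    obtain ⟨B₁, B₂, hB₁, hB₂, rfl⟩ := hold.1 fun i hi => hrows i hi ▸ h i (by omega)
    refine ⟨B₁, B₂, hB₁, hB₂, rfl, ?_⟩
    rw [← hankelRow_extendSeq_last h2r hA₁ hA₂ hchar hd hl hlm hB₁ hB₂]
    exact h (l - 1) (by omega)
  · rintro ⟨B₁, B₂, hB₁, hB₂, rfl, hlast⟩ i hi
    rcases lt_or_eq_of_le (Nat.le_sub_one_of_lt hi) with hi | rfl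
    · rw [hrows i hi]
      exact hold.2 ⟨B₁, B₂, hB₁, hB₂, rfl⟩ i hi
    · rw [hankelRow_extendSeq_last h2r hA₁ hA₂ hchar hd hl hlm hB₁ hB₂]
      exact hlast

lemma isCharSeq_extendSeq_of_eq_zero (h2r : 2 * r ≤ n) (hcop : IsCoprime A₁ A₂)
    (hd₁ : A₁.degree = r) (hd₂ : A₂.degree < r) (hchar : IsCharSeq F n r A₁ A₂ α)
    (hd : 1 ≤ r → d = hankelRow α (r - 1) A₂) (hd0 : d ≠ 0)
    (hs : hankelRow (extendSeq F n α c) (n + 1 - r) A₁ = 0) :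
    IsCharSeq F (n + 1) r A₁ A₂ (extendSeq F n α c) := by
  have hA₁ : A₁.natDegree ≤ r := (natDegree_eq_of_degree_eq_some hd₁).le
  have hA₂ : A₂.natDegree ≤ r := natDegree_le_of_degree_le hd₂.le
  rw [isCharSeq_iff (degLE_of_natDegree_le (by omega)) (degLE_of_natDegree_le (by omega))]
  intro l m hl hm hlm P hP
  rw [ker_hankel_extendSeq_iff h2r hcop hd₁ hd₂ hchar hd hl (by omega) hP, hs,
    show (m : ℤ) - (((n + 1 : ℕ) : ℤ) + 2 - r) - 1 = (m : ℤ) - ((n : ℤ) + 2 - r) - 1 - 1 by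
      push_cast; ring]
  simp only [HasBoundedRep, degLE_sub_one_iff, mul_zero, zero_add, mul_eq_zero, hd0, or_false]
  exact exists₂_congr fun _ _ => by tauto

lemma isCharSeq_extendSeq_of_ne_zero (h2r : 2 * r ≤ n) (hcop : IsCoprime A₁ A₂)
    (hd₁ : A₁.degree = r) (hd₂ : A₂.degree < r) (hchar : IsCharSeq F n r A₁ A₂ α)
    (hd : 1 ≤ r → d = hankelRow α (r - 1) A₂) (hd0 : d ≠ 0)
    (hs : hankelRow (extendSeq F n α c) (n + 1 - r) A₁ ≠ 0) :
    IsCharSeq F (n + 1) (r + 1) A₁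
      (C (-hankelRow (extendSeq F n α c) (n + 1 - r) A₁ / d) * A₂ + X ^ (n + 2 - 2 * r) * A₁)
      (extendSeq F n α c) := by
  set s := hankelRow (extendSeq F n α c) (n + 1 - r) A₁ with hs_def
  have hA₁ : A₁.natDegree ≤ r := (natDegree_eq_of_degree_eq_some hd₁).le
  have hA₂ : A₂.natDegree ≤ r := natDegree_le_of_degree_le hd₂.le
  have hA₂' := degLE_twist (-s / d) (degLE_of_natDegree_le (B := A₁) (k := r) (by omega))
    (degLE_of_natDegree_le (B := A₂) (k := r) (by omega)) h2r
  have hcond : ∀ x y : F, x * s + y * d = 0 ↔ x = (-s / d)⁻¹ * y := fun x y => by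
    rw [inv_div, ← sub_eq_zero]
    constructor <;> intro h <;> field_simp at h ⊢ <;> linear_combination h
  rw [isCharSeq_iff (degLE_of_natDegree_le (by omega)) hA₂']
  intro l m hl hm hlm P hP
  rw [ker_hankel_extendSeq_iff h2r hcop hd₁ hd₂ hchar hd hl (by omega) hP, ← hs_def]
  simp only [hcond]
  have hk : (m : ℤ) - r - 1 = ((m : ℤ) - ((n : ℤ) + 2 - r) - 1) + ((n + 2 - 2 * r : ℕ) : ℤ) := by
    omega
  rw [show (m : ℤ) - ((r + 1 : ℕ) : ℤ) - 1 = (m : ℤ) - r - 1 - 1 by push_cast; ring,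
    show (m : ℤ) - (((n + 1 : ℕ) : ℤ) + 2 - (r + 1 : ℕ)) - 1 = (m : ℤ) - ((n : ℤ) + 2 - r) - 1 by
      push_cast; ring, hk]
  exact hasBoundedRep_twist_iff (div_ne_zero (neg_ne_zero.2 hs) hd0) _ _

end Extension

lemma rank_add_eq_of_ker {l m k : ℕ} (M : Matrix (Fin l) (Fin m) F) {A : F[X]} (hA : A ≠ 0)
    (hAdeg : degLE F A ((m : ℤ) - k)) (hm : 1 ≤ m)
    (hker : ∀ P : F[X], P.natDegree < m →
      (M *ᵥ (fun j : Fin m => P.coeff j) = 0 ↔ ∃ B : F[X], B.degree < k ∧ P = B * A)) :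
    M.rank + k = m := by
  let Φ : degreeLT F k →ₗ[F] (Fin m → F) :=
    (LinearMap.pi fun j : Fin m => lcoeff F j) ∘ₗ LinearMap.mulRight F A ∘ₗ (degreeLT F k).subtype
  have hΦ : ∀ B : degreeLT F k, Φ B = fun j : Fin m => ((B : F[X]) * A).coeff j := fun _ => rfl
  have hdeg : ∀ B : F[X], B.degree < k → (B * A).natDegree < m := fun B hB =>
    natDegree_lt_of_degLE (degLE_mono (degLE_mul (degLE_sub_one_iff_degree_lt.2 hB) hAdeg)
      (by omega)) hm
  have hinj : Function.Injective Φ := by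
    refine (injective_iff_map_eq_zero Φ).2 fun B hB => Subtype.ext ?_
    have hB' := mem_degreeLT.1 B.2
    rw [hΦ, show (0 : Fin m → F) = fun j : Fin m => (0 : F[X]).coeff j from rfl,
      coeff_vec_inj (hdeg _ hB') (by simp; omega), mul_eq_zero] at hB
    exact hB.resolve_right hA
  have hrange : LinearMap.ker M.mulVecLin = LinearMap.range Φ := by
    ext v
    obtain ⟨P, hP, rfl⟩ := exists_natDegree_lt_coeff_eq hm v
    rw [LinearMap.mem_ker, mulVecLin_apply, hker P hP]
    constructor
    · rintro ⟨B, hB, rfl⟩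
      exact ⟨⟨B, mem_degreeLT.2 hB⟩, rfl⟩
    · rintro ⟨B, hB⟩
      rw [hΦ, coeff_vec_inj (hdeg _ (mem_degreeLT.1 B.2)) hP] at hB
      exact ⟨B, mem_degreeLT.1 B.2, hB.symm⟩
  have := LinearMap.finrank_range_add_finrank_ker M.mulVecLin
  rw [hrange, LinearMap.finrank_range_of_inj hinj, (degreeLTEquiv F k).finrank_eq] at this
  simpa [Matrix.rank] using this

lemma rank_hankel_of_isCharSeq {n r : ℕ} {α : ℕ → F} {A₁ A₂ : F[X]}
    (hchar : IsCharSeq F n r A₁ A₂ α) (hA₁0 : A₁ ≠ 0) (hA₁ : degLE F A₁ r)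
    (hA₂ : degLE F A₂ ((n : ℤ) + 2 - r)) {l m : ℕ} (hl : 1 ≤ l) (hlm : l + m = n + 2)
    (hrm : r < m) (hneg : (m : ℤ) - ((n : ℤ) + 2 - r) - 1 < 0) :
    (hankel F l m α).rank = r := by
  suffices (hankel F l m α).rank + (m - r) = m by omega
  refine rank_add_eq_of_ker _ hA₁0 (degLE_mono hA₁ (by omega)) (by omega) fun P hP => ?_
  rw [hankel_mulVec_coeff_eq_zero_iff α hP,
    (isCharSeq_iff hA₁ hA₂).1 hchar l m hl (by omega) hlm P hP]
  constructor
  · rintro ⟨B₁, B₂, hB₁, hB₂, rfl⟩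
    refine ⟨B₁, degLE_sub_one_iff_degree_lt.1 (degLE_mono hB₁ (by omega)), ?_⟩
    rw [eq_zero_of_degLE_of_neg hB₂ hneg, zero_mul, add_zero]
  · rintro ⟨B, hB, rfl⟩
    exact ⟨B, 0, degLE_mono (degLE_sub_one_iff_degree_lt.2 hB) (by omega), degLE_zero _, by ring⟩

lemma hankel_extendSeq {n k k' : ℕ} {α : ℕ → F} {c : F} (h : k + k' ≤ n + 2) :
    hankel F k k' (extendSeq F n α c) = hankel F k k' α := by
  ext i j
  exact if_neg (by omega)

lemma hankelRow_extendSeq_top {n r : ℕ} {α : ℕ → F} {A : F[X]} (hA : A.natDegree ≤ r)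
    (hrn : r ≤ n + 1) (c : F) :
    hankelRow (extendSeq F n α c) (n + 1 - r) A =
      hankelRow (extendSeq F n α 0) (n + 1 - r) A + A.coeff r * c := by
  have hlt : A.natDegree < r + 1 := by omega
  rw [hankelRow_eq_sum_range _ _ hlt, hankelRow_eq_sum_range _ _ hlt, Finset.sum_range_succ,
    Finset.sum_range_succ, Finset.sum_congr rfl fun k hk => by
      rw [show extendSeq F n α c (n + 1 - r + k) = extendSeq F n α 0 (n + 1 - r + k) from
        (if_neg (by simp at hk; omega)).trans (if_neg (by simp at hk; omega)).symm]]
  simp only [extendSeq, show n + 1 - r + r = n + 1 by omega, if_true, zero_mul, add_zero]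
  ring

lemma le_rank_hankel {k l m : ℕ} {α : ℕ → F} (hkl : k ≤ l) (hkm : k ≤ m)
    (h : (hankel F k k α).det ≠ 0) : k ≤ (hankel F l m α).rank := by
  have hsub : hankel F k k α = (hankel F l m α).submatrix (Fin.castLE hkl) (Fin.castLE hkm) := by
    ext i j
    rfl
  calc k = (hankel F k k α).rank := by
        rw [rank_of_isUnit _ ((isUnit_iff_isUnit_det _).2 (isUnit_iff_ne_zero.2 h)),
          Fintype.card_fin]
    _ ≤ (hankel F l m α).rank := hsub ▸ rank_submatrix_le _ _ _

lemma det_hankel_rhoC_ne_zero (n : ℕ) (α : ℕ → F) :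
    (hankel F (rhoC F n α) (rhoC F n α) α).det ≠ 0 :=
  (Nat.sSup_mem (s := {l | l ≤ (n + 2) / 2 ∧ (hankel F l l α).det ≠ 0})
    ⟨0, Nat.zero_le _, by simp⟩ ⟨_, fun _ hx => hx.1⟩).2

lemma rhoC_eq {n r : ℕ} {α : ℕ → F} (hr : r ≤ (n + 2) / 2) (hdet : (hankel F r r α).det ≠ 0)
    (hmax : ∀ l, r < l → l ≤ (n + 2) / 2 → (hankel F l l α).det = 0) : rhoC F n α = r :=
  le_antisymm (csSup_le ⟨r, hr, hdet⟩ fun l ⟨hl, hdl⟩ => not_lt.1 fun h => hdl (hmax l h hl))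
    (le_csSup ⟨_, fun _ hx => hx.1⟩ ⟨hr, hdet⟩)

lemma rhoC_extendSeq {n r : ℕ} {α : ℕ → F} {c : F} (hr : r + 1 ≤ (n + 2) / 2)
    (hρ : rhoC F n α = r) (hrank : (hankel F ((n + 2) / 2) ((n + 3) / 2) α).rank = r)
    (hrank' : (hankel F ((n + 3) / 2) ((n + 4) / 2) (extendSeq F n α c)).rank ≤ r + 1) :
    rhoC F (n + 1) (extendSeq F n α c) = r := by
  refine rhoC_eq (by omega) ?_ fun l hl hl' => ?_
  · rw [hankel_extendSeq (by omega), ← hρ]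
    exact det_hankel_rhoC_ne_zero n α
  · by_contra hdet
    have := le_rank_hankel (l := (n + 3) / 2) (m := (n + 4) / 2) (by omega) (by omega) hdet
    obtain rfl : l = r + 1 := by omega
    rw [hankel_extendSeq (by omega)] at hdet
    have := le_rank_hankel (l := (n + 2) / 2) (m := (n + 3) / 2) hr (by omega) hdet
    omega

lemma piC_succ (n : ℕ) (α : ℕ → F) :
    piC F (n + 1) α = (hankel F ((n + 3) / 2) ((n + 4) / 2) α).rank - rhoC F (n + 1) α := rfl

lemma bijective_hankelRow_extendSeq {n r : ℕ} {α : ℕ → F} {A : F[X]} {d : F}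
    (hA : A.natDegree = r) (hA0 : A ≠ 0) (hrn : r ≤ n + 1) (hd : d ≠ 0) :
    Function.Bijective fun c => -hankelRow (extendSeq F n α c) (n + 1 - r) A / d := by
  have hlead : -A.coeff r / d ≠ 0 := by simpa [hd, ← hA] using hA0
  convert ((Equiv.mulLeft₀ _ hlead).trans
    (Equiv.addRight (-hankelRow (extendSeq F n α 0) (n + 1 - r) A / d))).bijective using 1
  ext c
  simp only [Equiv.trans_apply, Equiv.mulLeft₀_apply, Equiv.coe_addRight,
    hankelRow_extendSeq_top hA.le hrn c]
  ring

end

theorem stmt_17_general (F : Type) [Field F] (n r : ℕ) (α : ℕ → F)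
    (A₁ A₂ : Polynomial F)
    (hr : r + 1 ≤ (n + 2) / 2)
    (hrank : (hankel F ((n + 2) / 2) ((n + 3) / 2) α).rank = r)
    (hρ : rhoC F n α = r)
    (hcop : IsCoprime A₁ A₂)
    (hd1 : A₁.degree = (r : WithBot ℕ)) (hd2 : A₂.degree < (r : WithBot ℕ))
    (hchar : IsCharSeq F n r A₁ A₂ α) :
    ∃ b : F → F, Function.Bijective b ∧ ∀ c : F,
      rhoC F (n + 1) (extendSeq F n α c) = r ∧
      (b c = 0 →
        piC F (n + 1) (extendSeq F n α c) = 0 ∧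
        (hankel F ((n + 3) / 2) ((n + 4) / 2) (extendSeq F n α c)).rank = r ∧
        IsCharSeq F (n + 1) r A₁ A₂ (extendSeq F n α c)) ∧
      (b c ≠ 0 →
        piC F (n + 1) (extendSeq F n α c) = 1 ∧
        (hankel F ((n + 3) / 2) ((n + 4) / 2) (extendSeq F n α c)).rank = r + 1 ∧
        IsCharSeq F (n + 1) (r + 1) A₁
          (Polynomial.C (b c) * A₂ + Polynomial.X ^ (n + 2 - 2 * r) * A₁)
          (extendSeq F n α c)) := by
  have h2r : 2 * r ≤ n := by omega
  have hA₁0 : A₁ ≠ 0 := by rintro rfl; simp at hd1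
  have hA₁ : A₁.natDegree = r := natDegree_eq_of_degree_eq_some hd1
  have hdeg₁ : degLE F A₁ r := degLE_of_natDegree_le (by omega)
  have hdeg₂ : degLE F A₂ r :=
    degLE_of_natDegree_le (by have := natDegree_le_of_degree_le hd2.le; omega)
  obtain ⟨d, hd0, hd⟩ :=
    exists_ne_zero_eq_hankelRow_sub_one h2r hcop hd1 hd2 hchar (hρ ▸ det_hankel_rhoC_ne_zero n α)
  refine ⟨fun c => -hankelRow (extendSeq F n α c) (n + 1 - r) A₁ / d,
    bijective_hankelRow_extendSeq hA₁ hA₁0 (by omega) hd0, fun c => ?_⟩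
  by_cases hs : hankelRow (extendSeq F n α c) (n + 1 - r) A₁ = 0
  · have hchar' := isCharSeq_extendSeq_of_eq_zero h2r hcop hd1 hd2 hchar hd hd0 hs
    have hrank' := rank_hankel_of_isCharSeq hchar' hA₁0 hdeg₁
      (degLE_mono hdeg₂ (by push_cast; omega)) (l := (n + 3) / 2) (m := (n + 4) / 2)
      (by omega) (by omega) (by omega) (by push_cast; omega)
    have hρ' := rhoC_extendSeq hr hρ hrank (c := c) (by omega)
    exact ⟨hρ', fun _ => ⟨by rw [piC_succ, hrank', hρ', Nat.sub_self], hrank', hchar'⟩,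
      fun h => absurd (by simp [hs]) h⟩
  · have hchar' := isCharSeq_extendSeq_of_ne_zero h2r hcop hd1 hd2 hchar hd hd0 hs
    have hrank' := rank_hankel_of_isCharSeq hchar' hA₁0 (degLE_mono hdeg₁ (by omega))
      (degLE_twist _ hdeg₁ hdeg₂ h2r) (l := (n + 3) / 2) (m := (n + 4) / 2)
      (by omega) (by omega) (by omega) (by push_cast; omega)
    have hρ' := rhoC_extendSeq hr hρ hrank (c := c) hrank'.le
    exact ⟨hρ', fun h => absurd h (div_ne_zero (neg_ne_zero.2 hs) hd0),
      fun _ => ⟨by rw [piC_succ, hrank', hρ', Nat.add_sub_cancel_left], hrank', hchar'⟩⟩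

/-- extending a quasi-regular sequence `α ∈ L_n(r,r,0)` by one entry
`α_{n+1} = c`. There is a bijection `b : F → F` (the correspondence `α_{n+1} ↔ β`) so that:
`ρ(α') = r` always; if `b c = 0` (exactly one value of `c`) then `π(α') = 0`, the rank stays
`r` and the characteristic polynomials are unchanged; for the other `q-1` values,
`π(α') = 1`, the rank becomes `r+1`, `A₁' = A₁` and `A₂' = β A₂ + T^{c₂-c₁} A₁` with
`β = b c ∈ F^*`. -/
theorem stmt_17 (F : Type) [Field F] [Fintype F] (n r : ℕ) (α : ℕ → F)
    (A₁ A₂ : Polynomial F)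
    (hr : r + 1 ≤ (n + 2) / 2)
    (hrank : (hankel F ((n + 2) / 2) ((n + 3) / 2) α).rank = r)
    (hρ : rhoC F n α = r) (hπ : piC F n α = 0)
    (hcop : IsCoprime A₁ A₂)
    (hd1 : A₁.degree = (r : WithBot ℕ)) (hd2 : A₂.degree < (r : WithBot ℕ))
    (hchar : IsCharSeq F n r A₁ A₂ α) :
    ∃ b : F → F, Function.Bijective b ∧ ∀ c : F,
      rhoC F (n + 1) (extendSeq F n α c) = r ∧
      (b c = 0 →
        piC F (n + 1) (extendSeq F n α c) = 0 ∧
        (hankel F ((n + 3) / 2) ((n + 4) / 2) (extendSeq F n α c)).rank = r ∧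
        IsCharSeq F (n + 1) r A₁ A₂ (extendSeq F n α c)) ∧
      (b c ≠ 0 →
        piC F (n + 1) (extendSeq F n α c) = 1 ∧
        (hankel F ((n + 3) / 2) ((n + 4) / 2) (extendSeq F n α c)).rank = r + 1 ∧
        IsCharSeq F (n + 1) (r + 1) A₁
          (Polynomial.C (b c) * A₂ + Polynomial.X ^ (n + 2 - 2 * r) * A₁)
          (extendSeq F n α c)) :=
  stmt_17_general F n r α A₁ A₂ hr hrank hρ hcop hd1 hd2 hchar
end
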